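/- arXiv:2511.17451 — 7 statements merged into one kernel-verified Lean document; each statement's English description precedes it below -/
import Mathlib

section
/- The spinor ψ^∞ = (ψ₁^∞, ψ₂^∞) with ψ₁^∞(x) = √ν tanh(κx)/(1-ν tanh²(κx)) and ψ₂^∞(x) = -(ν/(1-ν))·(1-tanh²(κx))/(1-ν tanh²(κx)) satisfies the pointwise ODE system ψ₂' = (m - M)ψ₁ and ψ₁' = -(m + M)ψ₂ with M := m - 2g, i.e. it is a resonance state of A₁ = iσ₂∂ₓ + mσ₃ - 2gσ₃ at energy m. -/
/-!
With `t = tanh (κ x)` one has `dt/dx = κ (1 - t²)`, so `ψ₁`, `ψ₂` and `g` are rational functions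
of `t`, and after the chain rule both equations become rational identities in `t`. These follow
from the two parameter relations `√ν κ = m - ω` and `ν (m + ω) = m - ω`; the second one gives
`m - g = ω (1 + ν t²) / (1 - ν t²)`.
-/

open Real

theorem Real.hasDerivAt_tanh (x : ℝ) : HasDerivAt tanh (1 - tanh x ^ 2) x := by
  have h := (hasDerivAt_sinh x).div (hasDerivAt_cosh x) (cosh_pos x).ne'
  rw [show sinh / cosh = tanh from funext fun y => (tanh_eq_sinh_div_cosh y).symm] at h
  refine h.congr_deriv ?_
  rw [tanh_eq_sinh_div_cosh, div_pow, one_sub_div (pow_ne_zero 2 (cosh_pos x).ne')]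
  ring

theorem hasDerivAt_tanh_const_mul (κ x : ℝ) :
    HasDerivAt (fun y => tanh (κ * y)) (κ * (1 - tanh (κ * x) ^ 2)) x := by
  rw [mul_comm κ (1 - _)]
  exact (hasDerivAt_tanh (κ * x)).comp x (by simpa using (hasDerivAt_id x).const_mul κ)

theorem hasDerivAt_div_one_sub_mul_sq {ν t : ℝ} (hD : 1 - ν * t ^ 2 ≠ 0) :
    HasDerivAt (fun s => s / (1 - ν * s ^ 2)) ((1 + ν * t ^ 2) / (1 - ν * t ^ 2) ^ 2) t := by
  refine ((hasDerivAt_id' t).div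
    (((hasDerivAt_pow 2 t).const_mul ν).const_sub 1) hD).congr_deriv ?_
  ring

theorem hasDerivAt_one_sub_sq_div_one_sub_mul_sq {ν t : ℝ} (hD : 1 - ν * t ^ 2 ≠ 0) :
    HasDerivAt (fun s => (1 - s ^ 2) / (1 - ν * s ^ 2))
      (-(2 * (1 - ν) * t) / (1 - ν * t ^ 2) ^ 2) t := by
  refine (((hasDerivAt_pow 2 t).const_sub 1).div
    (((hasDerivAt_pow 2 t).const_mul ν).const_sub 1) hD).congr_deriv ?_
  ring

theorem sqrt_div_mul_sqrt_sq_sub_sq {m ω : ℝ} (h₁ : 0 ≤ m - ω) (h₂ : 0 < m + ω) :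
    √((m - ω) / (m + ω)) * √(m ^ 2 - ω ^ 2) = m - ω := by
  have hsq : (m - ω) / (m + ω) * (m ^ 2 - ω ^ 2) = (m - ω) ^ 2 := by
    field_simp
    ring
  rw [← sqrt_mul (div_nonneg h₁ h₂.le), hsq, sqrt_sq h₁]

section ResonanceIdentities

variable {m ω κ ν s t : ℝ}

theorem resonance_identity_fst (hs : s ^ 2 = ν) (hsκ : s * κ = m - ω) (hν : 1 - ν ≠ 0)
    (hD : 1 - ν * t ^ 2 ≠ 0) :
    -(ν / (1 - ν)) * (-(2 * (1 - ν) * t) / (1 - ν * t ^ 2) ^ 2 * (κ * (1 - t ^ 2))) =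
      2 * ((m - ω) * (1 - t ^ 2) / (1 - ν * t ^ 2)) * (s * t / (1 - ν * t ^ 2)) := by
  field_simp
  linear_combination (t * (1 - t ^ 2) * s) * hsκ - (t * (1 - t ^ 2) * κ) * hs

theorem resonance_identity_snd (hsκ : s * κ = m - ω) (hνω : ν * (m + ω) = m - ω)
    (hν : 1 - ν ≠ 0) (hD : 1 - ν * t ^ 2 ≠ 0) :
    s * ((1 + ν * t ^ 2) / (1 - ν * t ^ 2) ^ 2 * (κ * (1 - t ^ 2))) =
      -2 * (m - (m - ω) * (1 - t ^ 2) / (1 - ν * t ^ 2)) *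
        (-(ν / (1 - ν)) * (1 - t ^ 2) / (1 - ν * t ^ 2)) := by
  field_simp
  linear_combination (1 + ν * t ^ 2) * (1 - t ^ 2) * (1 - ν) * hsκ -
    (1 - t ^ 2) * (1 - ν * t ^ 2) * hνω

end ResonanceIdentities

theorem stmt2_general (m ω κ ν : ℝ) (hω1 : 0 < ω) (hω2 : ω < m)
    (hκ : κ = Real.sqrt (m ^ 2 - ω ^ 2)) (hν : ν = (m - ω) / (m + ω))
    (g ψ1 ψ2 M : ℝ → ℝ)
    (hg : ∀ x, g x = (m - ω) * (1 - Real.tanh (κ * x) ^ 2) / (1 - ν * Real.tanh (κ * x) ^ 2))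
    (hψ1 : ∀ x, ψ1 x = Real.sqrt ν * Real.tanh (κ * x) / (1 - ν * Real.tanh (κ * x) ^ 2))
    (hψ2 : ∀ x, ψ2 x = -(ν / (1 - ν)) * (1 - Real.tanh (κ * x) ^ 2) / (1 - ν * Real.tanh (κ * x) ^ 2))
    (hM : ∀ x, M x = m - 2 * g x) :
    ∀ x, HasDerivAt ψ2 ((m - M x) * ψ1 x) x ∧ HasDerivAt ψ1 (-(m + M x) * ψ2 x) x := by
  have hmω : 0 < m + ω := by linarith
  have hν0 : 0 < ν := hν ▸ div_pos (by linarith) hmω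
  have hν1 : 1 - ν ≠ 0 := by
    linarith [show ν < 1 from hν ▸ (div_lt_one hmω).2 (by linarith)]
  have hsκ : √ν * κ = m - ω := hν ▸ hκ ▸ sqrt_div_mul_sqrt_sq_sub_sq (by linarith) hmω
  have hνω : ν * (m + ω) = m - ω := by rw [hν]; field_simp
  intro x
  have hD : 1 - ν * tanh (κ * x) ^ 2 ≠ 0 := by nlinarith [tanh_sq_lt_one (κ * x)]
  have ht := hasDerivAt_tanh_const_mul κ x
  have hψ1' := ((hasDerivAt_div_one_sub_mul_sq hD).comp x ht).const_mul √ν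
  have hψ2' :=
    ((hasDerivAt_one_sub_sq_div_one_sub_mul_sq hD).comp x ht).const_mul (-(ν / (1 - ν)))
  rw [resonance_identity_snd hsκ hνω hν1 hD] at hψ1'
  rw [resonance_identity_fst (sq_sqrt hν0.le) hsκ hν1 hD] at hψ2'
  simp only [← mul_div_assoc, Function.comp_def, ← hψ1, ← hψ2, ← hg] at hψ1' hψ2'
  rw [hM]
  exact ⟨hψ2'.congr_deriv (by ring), hψ1'.congr_deriv (by ring)⟩

theorem stmt2 (m ω κ ν : ℝ) (hm : 0 < m) (hω1 : 0 < ω) (hω2 : ω < m)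
    (hκ : κ = Real.sqrt (m ^ 2 - ω ^ 2)) (hν : ν = (m - ω) / (m + ω))
    (g ψ1 ψ2 M : ℝ → ℝ)
    (hg : ∀ x, g x = (m - ω) * (1 - Real.tanh (κ * x) ^ 2) / (1 - ν * Real.tanh (κ * x) ^ 2))
    (hψ1 : ∀ x, ψ1 x = Real.sqrt ν * Real.tanh (κ * x) / (1 - ν * Real.tanh (κ * x) ^ 2))
    (hψ2 : ∀ x, ψ2 x = -(ν / (1 - ν)) * (1 - Real.tanh (κ * x) ^ 2) / (1 - ν * Real.tanh (κ * x) ^ 2))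
    (hM : ∀ x, M x = m - 2 * g x) :
    ∀ x, HasDerivAt ψ2 ((m - M x) * ψ1 x) x ∧ HasDerivAt ψ1 (-(m + M x) * ψ2 x) x :=
  stmt2_general m ω κ ν hω1 hω2 hκ hν g ψ1 ψ2 M hg hψ1 hψ2 hM
end

section
/- The infimum over ℝ of |ψ^∞(x)|² = ψ₁^∞(x)² + ψ₂^∞(x)² equals (1/(4ω²))·(m²-2ω²)/2 if 0 < ω ≤ m/2, and (1/(4ω²))·(m-ω)² if m/2 ≤ ω < m; in particular this infimum is strictly positive. -/
/-!
With `t = tanh (κ x)`, `|ψ^∞(x)|²` is the rational function `sqNormProfile ν s` of `s = t²`, and `s`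
sweeps out exactly `[0, 1)`. For `ν = (m - ω)/(m + ω) ≤ 1/3` (i.e. `ω ≥ m/2`) the profile is minimal
at `s = 0`; otherwise at its interior critical point `s = (3ν - 1)/(ν (3 - ν))`.
-/

open Real Set

theorem range_tanh_const_mul_sq {κ : ℝ} (hκ : κ ≠ 0) :
    range (fun x => tanh (κ * x) ^ 2) = Ico 0 1 := by
  ext s
  constructor
  · rintro ⟨x, rfl⟩
    exact ⟨sq_nonneg _, tanh_sq_lt_one _⟩
  · rintro ⟨hs0, hs1⟩
    have hsqrt : √s ∈ Ioo (-1) 1 :=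
      ⟨by linarith [sqrt_nonneg s], (sqrt_lt' one_pos).2 (by simpa using hs1)⟩
    refine ⟨artanh √s / κ, ?_⟩
    simp only [mul_div_cancel₀ _ hκ, tanh_artanh hsqrt, sq_sqrt hs0]

noncomputable def sqNormProfile (ν s : ℝ) : ℝ :=
  (ν * (1 - ν) ^ 2 * s + ν ^ 2 * (1 - s) ^ 2) / ((1 - ν) ^ 2 * (1 - ν * s) ^ 2)

section sqNormProfile

variable {ν s : ℝ}

theorem sq_add_sq_eq_sqNormProfile {t : ℝ} (hν0 : 0 ≤ ν) (hν1 : ν < 1) (ht : t ^ 2 < 1) :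
    (√ν * t / (1 - ν * t ^ 2)) ^ 2 + (-(ν / (1 - ν)) * (1 - t ^ 2) / (1 - ν * t ^ 2)) ^ 2 =
      sqNormProfile ν (t ^ 2) := by
  have h1ν : 1 - ν ≠ 0 := by linarith
  have hden : 1 - ν * t ^ 2 ≠ 0 := by nlinarith
  rw [sqNormProfile, div_pow, div_pow, mul_pow, sq_sqrt hν0]
  field_simp

theorem sqNormProfile_zero : sqNormProfile ν 0 = ν ^ 2 / (1 - ν) ^ 2 := by
  simp [sqNormProfile]

theorem sqNormProfile_zero_le (hν0 : 0 ≤ ν) (hν : ν ≤ 1 / 3) (hs0 : 0 ≤ s) (hs1 : s < 1) :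
    sqNormProfile ν 0 ≤ sqNormProfile ν s := by
  have h1ν : 0 < 1 - ν := by linarith
  have hden : 0 < 1 - ν * s := by nlinarith
  -- this is the difference of the two sides after cross-multiplication
  have key : 0 ≤ ν * (1 - ν) ^ 3 * s * (1 - 3 * ν + ν * (1 + ν) * s) := by
    have : 0 ≤ 1 - 3 * ν + ν * (1 + ν) * s := by nlinarith
    positivity
  rw [sqNormProfile_zero, sqNormProfile, div_le_div_iff₀ (by positivity) (by positivity)]
  linarith

theorem criticalValue_le_sqNormProfile (hν0 : 0 ≤ ν) (hν1 : ν < 1) (hs1 : s < 1) :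
    (6 * ν - ν ^ 2 - 1) / (8 * (1 - ν) ^ 2) ≤ sqNormProfile ν s := by
  have h1ν : 0 < 1 - ν := by linarith
  have hden : 0 < 1 - ν * s := by nlinarith
  rw [sqNormProfile, div_le_div_iff₀ (by positivity) (by positivity)]
  nlinarith [sq_nonneg ((1 - ν) * (4 * (1 - ν) - (3 - ν) * (1 - ν * s)))]

theorem sqNormProfile_criticalPoint (hν0 : 0 < ν) (hν1 : ν < 1) :
    sqNormProfile ν ((3 * ν - 1) / (ν * (3 - ν))) = (6 * ν - ν ^ 2 - 1) / (8 * (1 - ν) ^ 2) := by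
  have h1ν : 1 - ν ≠ 0 := by linarith
  have h3ν : 3 - ν ≠ 0 := by linarith
  have hden : 1 - ν * ((3 * ν - 1) / (ν * (3 - ν))) = 4 * (1 - ν) / (3 - ν) := by
    field_simp
    ring
  rw [sqNormProfile, hden]
  field_simp
  ring

theorem isLeast_sqNormProfile_of_le_one_third (hν0 : 0 ≤ ν) (hν : ν ≤ 1 / 3) :
    IsLeast (sqNormProfile ν '' Ico 0 1) (ν ^ 2 / (1 - ν) ^ 2) :=
  sqNormProfile_zero (ν := ν) ▸ ⟨⟨0, ⟨le_rfl, one_pos⟩, rfl⟩, by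
    rintro _ ⟨s, ⟨hs0, hs1⟩, rfl⟩
    exact sqNormProfile_zero_le hν0 hν hs0 hs1⟩

theorem isLeast_sqNormProfile_of_one_third_le (hν : 1 / 3 ≤ ν) (hν1 : ν < 1) :
    IsLeast (sqNormProfile ν '' Ico 0 1) ((6 * ν - ν ^ 2 - 1) / (8 * (1 - ν) ^ 2)) := by
  have hν0 : 0 < ν := by linarith
  have hden : 0 < ν * (3 - ν) := by nlinarith
  refine ⟨⟨_, ⟨?_, ?_⟩, sqNormProfile_criticalPoint hν0 hν1⟩, ?_⟩
  · exact div_nonneg (by linarith) hden.le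
  · rw [div_lt_one hden]
    nlinarith
  · rintro _ ⟨s, ⟨hs0, hs1⟩, rfl⟩
    exact criticalValue_le_sqNormProfile hν0.le hν1 hs1

theorem iInf_sqNormProfile_tanh_const_mul_sq {κ c : ℝ} (hκ : κ ≠ 0)
    (hc : IsLeast (sqNormProfile ν '' Ico 0 1) c) :
    ⨅ x, sqNormProfile ν (tanh (κ * x) ^ 2) = c := by
  rw [iInf, ← hc.csInf_eq, ← range_tanh_const_mul_sq hκ, ← range_comp]
  rfl

end sqNormProfile

theorem stmt5_general (m ω κ ν : ℝ) (hω1 : 0 < ω) (hω2 : ω < m)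
    (hκ : κ = Real.sqrt (m ^ 2 - ω ^ 2)) (hν : ν = (m - ω) / (m + ω))
    (ψ1 ψ2 : ℝ → ℝ)
    (hψ1 : ∀ x, ψ1 x = Real.sqrt ν * Real.tanh (κ * x) / (1 - ν * Real.tanh (κ * x) ^ 2))
    (hψ2 : ∀ x, ψ2 x = -(ν / (1 - ν)) * (1 - Real.tanh (κ * x) ^ 2) / (1 - ν * Real.tanh (κ * x) ^ 2)) :
    (ω ≤ m / 2 → (⨅ x, ψ1 x ^ 2 + ψ2 x ^ 2) = 1 / (4 * ω ^ 2) * ((m ^ 2 - 2 * ω ^ 2) / 2)) ∧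
      (m / 2 ≤ ω → (⨅ x, ψ1 x ^ 2 + ψ2 x ^ 2) = 1 / (4 * ω ^ 2) * (m - ω) ^ 2) ∧
      0 < ⨅ x, ψ1 x ^ 2 + ψ2 x ^ 2 := by
  have hmω : 0 < m + ω := by linarith
  have hω0 : ω ≠ 0 := hω1.ne'
  have hν0 : 0 < ν := hν ▸ div_pos (by linarith) hmω
  have hν1 : ν < 1 := by rw [hν, div_lt_one hmω]; linarith
  have h1ν : 1 - ν = 2 * ω / (m + ω) := by rw [hν]; field_simp; ring
  have hκ0 : κ ≠ 0 := hκ ▸ (sqrt_pos.2 (by nlinarith)).ne'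
  have hψ (x : ℝ) : ψ1 x ^ 2 + ψ2 x ^ 2 = sqNormProfile ν (tanh (κ * x) ^ 2) := by
    rw [hψ1, hψ2]
    exact sq_add_sq_eq_sqNormProfile hν0.le hν1 (tanh_sq_lt_one _)
  have hinf {c : ℝ} (hc : IsLeast (sqNormProfile ν '' Ico 0 1) c) :
      ⨅ x, ψ1 x ^ 2 + ψ2 x ^ 2 = c := by
    simp only [hψ]
    exact iInf_sqNormProfile_tanh_const_mul_sq hκ0 hc
  have hsmall : ω ≤ m / 2 → (⨅ x, ψ1 x ^ 2 + ψ2 x ^ 2) =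
      1 / (4 * ω ^ 2) * ((m ^ 2 - 2 * ω ^ 2) / 2) := fun h => by
    rw [hinf (isLeast_sqNormProfile_of_one_third_le ?_ hν1), h1ν, hν]
    · field_simp
      ring
    · rw [hν, le_div_iff₀ hmω]; linarith
  have hlarge : m / 2 ≤ ω → (⨅ x, ψ1 x ^ 2 + ψ2 x ^ 2) = 1 / (4 * ω ^ 2) * (m - ω) ^ 2 :=
    fun h => by
    rw [hinf (isLeast_sqNormProfile_of_le_one_third hν0.le ?_), h1ν, hν]
    · field_simp
      ring
    · rw [hν, div_le_iff₀ hmω]; linarith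
  refine ⟨hsmall, hlarge, ?_⟩
  rcases le_total ω (m / 2) with h | h
  · rw [hsmall h]
    have : 0 < m ^ 2 - 2 * ω ^ 2 := by nlinarith
    positivity
  · rw [hlarge h]
    have : m - ω ≠ 0 := by linarith
    positivity

theorem stmt5 (m ω κ ν : ℝ) (hm : 0 < m) (hω1 : 0 < ω) (hω2 : ω < m)
    (hκ : κ = Real.sqrt (m ^ 2 - ω ^ 2)) (hν : ν = (m - ω) / (m + ω))
    (ψ1 ψ2 : ℝ → ℝ)
    (hψ1 : ∀ x, ψ1 x = Real.sqrt ν * Real.tanh (κ * x) / (1 - ν * Real.tanh (κ * x) ^ 2))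
    (hψ2 : ∀ x, ψ2 x = -(ν / (1 - ν)) * (1 - Real.tanh (κ * x) ^ 2) / (1 - ν * Real.tanh (κ * x) ^ 2)) :
    (ω ≤ m / 2 → (⨅ x, ψ1 x ^ 2 + ψ2 x ^ 2) = 1 / (4 * ω ^ 2) * ((m ^ 2 - 2 * ω ^ 2) / 2)) ∧
      (m / 2 ≤ ω → (⨅ x, ψ1 x ^ 2 + ψ2 x ^ 2) = 1 / (4 * ω ^ 2) * (m - ω) ^ 2) ∧
      0 < ⨅ x, ψ1 x ^ 2 + ψ2 x ^ 2 :=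
  stmt5_general m ω κ ν hω1 hω2 hκ hν ψ1 ψ2 hψ1 hψ2
end

section
/- The threshold energy density ℰ(x) := m|ψ^∞(x)|² - W(x)(ψ₁^∞(x)² - ψ₂^∞(x)²) satisfies ℰ(x) = (2m - g(x))ψ₂^∞(x)² + g(x)ψ₁^∞(x)² ≥ (m+ω)ψ₂^∞(x)² + g(x)ψ₁^∞(x)² > 0 for all x ∈ ℝ, and ℰ is integrable and bounded on ℝ. -/
/-!
Put `t = tanh (κ x)` and `r = (1 - t²) / (1 - ν t²) ∈ (0, 1]`. Then `g = (m - ω) r`,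
`ψ₂^∞ = -(ν / (1 - ν)) r` and `(ψ₁^∞)² ≤ ν / (1 - ν)²`. The identity for `ℰ` is algebraic, and
`0 ≤ g ≤ m - ω` together with `ψ₂^∞ ≠ 0` gives the lower bound and positivity; the same data
give `ℰ ≤ K r` for an explicit constant `K`. Finally `r ≤ sech² (κ x) / (1 - ν)` and
`sech² y = 1 / (1 + sinh² y) ≤ 1 / (1 + y²)`, which is integrable.
-/

open Real MeasureTheory

namespace Real

lemma one_sub_tanh_sq (x : ℝ) : 1 - tanh x ^ 2 = (cosh x ^ 2)⁻¹ := by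
  have := cosh_pos x
  rw [tanh_eq_sinh_div_cosh, div_pow, cosh_sq']
  field_simp
  ring

lemma sq_le_sinh_sq (x : ℝ) : x ^ 2 ≤ sinh x ^ 2 :=
  sq_le_sq.2 <| by rw [abs_sinh]; exact self_le_sinh_iff.2 (abs_nonneg x)

lemma one_sub_tanh_sq_le_inv_one_add_sq (x : ℝ) : 1 - tanh x ^ 2 ≤ (1 + x ^ 2)⁻¹ := by
  rw [one_sub_tanh_sq, cosh_sq']
  exact inv_anti₀ (by positivity) (by linarith [sq_le_sinh_sq x])

@[fun_prop]
lemma measurable_tanh : Measurable tanh := by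
  rw [show tanh = fun x => sinh x / cosh x from funext tanh_eq_sinh_div_cosh]
  fun_prop

lemma integrable_one_sub_tanh_sq : Integrable fun x => 1 - tanh x ^ 2 :=
  integrable_inv_one_add_sq.mono' (by fun_prop) <| ae_of_all _ fun x => by
    rw [norm_of_nonneg (sub_pos.2 (tanh_sq_lt_one x)).le]
    exact one_sub_tanh_sq_le_inv_one_add_sq x

end Real

section Profile

variable {ν t : ℝ}

lemma one_sub_sq_le_one_sub_mul_sq (hν : ν ≤ 1) : 1 - t ^ 2 ≤ 1 - ν * t ^ 2 := by
  nlinarith [sq_nonneg t]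

lemma one_sub_le_one_sub_mul_sq (hν : 0 ≤ ν) (ht : t ^ 2 ≤ 1) : 1 - ν ≤ 1 - ν * t ^ 2 := by
  nlinarith

lemma one_sub_sq_div_one_sub_mul_sq_pos (hν : ν ≤ 1) (ht : t ^ 2 < 1) :
    0 < (1 - t ^ 2) / (1 - ν * t ^ 2) :=
  div_pos (by linarith) (by linarith [one_sub_sq_le_one_sub_mul_sq (t := t) hν])

lemma one_sub_sq_div_one_sub_mul_sq_le_one (hν : ν ≤ 1) (ht : t ^ 2 < 1) :
    (1 - t ^ 2) / (1 - ν * t ^ 2) ≤ 1 :=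
  div_le_one_of_le₀ (one_sub_sq_le_one_sub_mul_sq hν)
    (by linarith [one_sub_sq_le_one_sub_mul_sq (t := t) hν])

lemma one_sub_sq_div_one_sub_mul_sq_le (hν₀ : 0 ≤ ν) (hν₁ : ν < 1) (ht : t ^ 2 ≤ 1) :
    (1 - t ^ 2) / (1 - ν * t ^ 2) ≤ (1 - t ^ 2) / (1 - ν) :=
  div_le_div_of_nonneg_left (by linarith) (by linarith) (one_sub_le_one_sub_mul_sq hν₀ ht)

lemma sqrt_mul_div_one_sub_mul_sq_sq_le (hν₀ : 0 ≤ ν) (hν₁ : ν < 1) (ht : t ^ 2 ≤ 1) :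
    (√ν * t / (1 - ν * t ^ 2)) ^ 2 ≤ ν / (1 - ν) ^ 2 := by
  rw [div_pow, mul_pow, sq_sqrt hν₀]
  exact div_le_div₀ hν₀ (mul_le_of_le_one_right hν₀ ht) (by nlinarith)
    (pow_le_pow_left₀ (by linarith) (one_sub_le_one_sub_mul_sq hν₀ ht) 2)

end Profile

lemma integrable_one_sub_tanh_sq_div {κ ν : ℝ} (hκ : κ ≠ 0) (hν₀ : 0 ≤ ν) (hν₁ : ν < 1) :
    Integrable fun x => (1 - tanh (κ * x) ^ 2) / (1 - ν * tanh (κ * x) ^ 2) :=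
  ((integrable_one_sub_tanh_sq.comp_mul_left' hκ).div_const (1 - ν)).mono'
    (by fun_prop : Measurable _).aestronglyMeasurable <| ae_of_all _ fun x => by
      rw [norm_of_nonneg (one_sub_sq_div_one_sub_mul_sq_pos hν₁.le (tanh_sq_lt_one _)).le]
      exact one_sub_sq_div_one_sub_mul_sq_le hν₀ hν₁ (tanh_sq_lt_one _).le

lemma energy_bounds {m ω ν r g a b : ℝ} (hω : 0 < ω) (hωm : ω < m) (hν₀ : 0 < ν) (hν₁ : ν < 1)
    (hr₀ : 0 < r) (hr₁ : r ≤ 1) (hg : g = (m - ω) * r) (hb : b = -(ν / (1 - ν)) * r)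
    (ha : a ^ 2 ≤ ν / (1 - ν) ^ 2) :
    (m + ω) * b ^ 2 + g * a ^ 2 ≤ (2 * m - g) * b ^ 2 + g * a ^ 2 ∧
      0 < (2 * m - g) * b ^ 2 + g * a ^ 2 ∧
      (2 * m - g) * b ^ 2 + g * a ^ 2 ≤
        (2 * m * (ν / (1 - ν)) ^ 2 + (m - ω) * (ν / (1 - ν) ^ 2)) * r := by
  have hc : 0 < ν / (1 - ν) := div_pos hν₀ (by linarith)
  have hg₀ : 0 ≤ g := hg ▸ mul_nonneg (by linarith) hr₀.le
  have hg_le : g ≤ m - ω := hg ▸ mul_le_of_le_one_right (by linarith) hr₁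
  have hb₀ : b ≠ 0 := hb ▸ mul_ne_zero (neg_ne_zero.2 hc.ne') hr₀.ne'
  have hb_sq : b ^ 2 ≤ (ν / (1 - ν)) ^ 2 * r := by
    rw [hb, mul_pow, neg_sq]
    exact mul_le_mul_of_nonneg_left (pow_le_of_le_one hr₀.le hr₁ two_ne_zero) (sq_nonneg _)
  have hlower : (m + ω) * b ^ 2 + g * a ^ 2 ≤ (2 * m - g) * b ^ 2 + g * a ^ 2 := by
    nlinarith [sq_nonneg b]
  have hmω : 0 < m + ω := by linarith
  refine ⟨hlower, lt_of_lt_of_le (by positivity) hlower, ?_⟩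
  nlinarith [mul_nonneg hg₀ (sq_nonneg b), mul_le_mul_of_nonneg_left ha hg₀]

theorem stmt6_general (m ω κ ν : ℝ) (hω1 : 0 < ω) (hω2 : ω < m)
    (hκ : κ = Real.sqrt (m ^ 2 - ω ^ 2)) (hν : ν = (m - ω) / (m + ω))
    (g W ψ1 ψ2 E : ℝ → ℝ)
    (hg : ∀ x, g x = (m - ω) * (1 - Real.tanh (κ * x) ^ 2) / (1 - ν * Real.tanh (κ * x) ^ 2))
    (hW : ∀ x, W x = m - g x)
    (hψ1 : ∀ x, ψ1 x = Real.sqrt ν * Real.tanh (κ * x) / (1 - ν * Real.tanh (κ * x) ^ 2))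
    (hψ2 : ∀ x, ψ2 x = -(ν / (1 - ν)) * (1 - Real.tanh (κ * x) ^ 2) / (1 - ν * Real.tanh (κ * x) ^ 2))
    (hE : ∀ x, E x = m * (ψ1 x ^ 2 + ψ2 x ^ 2) - W x * (ψ1 x ^ 2 - ψ2 x ^ 2)) :
    (∀ x, E x = (2 * m - g x) * ψ2 x ^ 2 + g x * ψ1 x ^ 2 ∧
        (m + ω) * ψ2 x ^ 2 + g x * ψ1 x ^ 2 ≤ E x ∧ 0 < E x) ∧
      Integrable E volume ∧ ∃ C, ∀ x, |E x| ≤ C := by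
  have hν₀ : 0 < ν := by rw [hν]; exact div_pos (by linarith) (by linarith)
  have hν₁ : ν < 1 := by rw [hν, div_lt_one (by linarith)]; linarith
  have hκ₀ : κ ≠ 0 := by rw [hκ]; exact (sqrt_pos.2 (by nlinarith)).ne'
  set r : ℝ → ℝ := fun x => (1 - tanh (κ * x) ^ 2) / (1 - ν * tanh (κ * x) ^ 2)
  set K := 2 * m * (ν / (1 - ν)) ^ 2 + (m - ω) * (ν / (1 - ν) ^ 2)
  have hr₁ (x : ℝ) : r x ≤ 1 := one_sub_sq_div_one_sub_mul_sq_le_one hν₁.le (tanh_sq_lt_one _)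
  have hEq (x : ℝ) : E x = (2 * m - g x) * ψ2 x ^ 2 + g x * ψ1 x ^ 2 := by rw [hE, hW]; ring
  have hbounds (x : ℝ) := hEq x ▸ energy_bounds hω1 hω2 hν₀ hν₁
    (one_sub_sq_div_one_sub_mul_sq_pos hν₁.le (tanh_sq_lt_one _)) (hr₁ x)
    (by rw [hg, mul_div_assoc]) (by rw [hψ2, mul_div_assoc])
    (hψ1 x ▸ sqrt_mul_div_one_sub_mul_sq_sq_le hν₀.le hν₁ (tanh_sq_lt_one _).le)
  have hK : 0 ≤ K := by
    have : 0 < m := by linarith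
    have : 0 < m - ω := by linarith
    have : 0 < 1 - ν := by linarith
    positivity
  have hE_meas : Measurable E := by
    rw [funext hE, funext hW, funext hg, funext hψ1, funext hψ2]; fun_prop
  refine ⟨fun x => ⟨hEq x, (hbounds x).1, (hbounds x).2.1⟩, ?_, K, fun x => ?_⟩
  · refine ((integrable_one_sub_tanh_sq_div hκ₀ hν₀.le hν₁).const_mul K).mono'
      hE_meas.aestronglyMeasurable (ae_of_all _ fun x => ?_)
    rw [norm_of_nonneg (hbounds x).2.1.le]
    exact (hbounds x).2.2
  · rw [abs_of_pos (hbounds x).2.1]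
    exact (hbounds x).2.2.trans (mul_le_of_le_one_right hK (hr₁ x))

theorem stmt6 (m ω κ ν : ℝ) (hm : 0 < m) (hω1 : 0 < ω) (hω2 : ω < m)
    (hκ : κ = Real.sqrt (m ^ 2 - ω ^ 2)) (hν : ν = (m - ω) / (m + ω))
    (g W ψ1 ψ2 E : ℝ → ℝ)
    (hg : ∀ x, g x = (m - ω) * (1 - Real.tanh (κ * x) ^ 2) / (1 - ν * Real.tanh (κ * x) ^ 2))
    (hW : ∀ x, W x = m - g x)
    (hψ1 : ∀ x, ψ1 x = Real.sqrt ν * Real.tanh (κ * x) / (1 - ν * Real.tanh (κ * x) ^ 2))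
    (hψ2 : ∀ x, ψ2 x = -(ν / (1 - ν)) * (1 - Real.tanh (κ * x) ^ 2) / (1 - ν * Real.tanh (κ * x) ^ 2))
    (hE : ∀ x, E x = m * (ψ1 x ^ 2 + ψ2 x ^ 2) - W x * (ψ1 x ^ 2 - ψ2 x ^ 2)) :
    (∀ x, E x = (2 * m - g x) * ψ2 x ^ 2 + g x * ψ1 x ^ 2 ∧
        (m + ω) * ψ2 x ^ 2 + g x * ψ1 x ^ 2 ≤ E x ∧ 0 < E x) ∧
      Integrable E volume ∧ ∃ C, ∀ x, |E x| ≤ C :=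
  stmt6_general m ω κ ν hω1 hω2 hκ hν g W ψ1 ψ2 E hg hW hψ1 hψ2 hE
end

section
/- The supremum of |ψ^∞| over ℝ equals √(m²-ω²)/(2ω), and the L¹-norm of the threshold energy density ℰ equals ((m²-ω²)/(4ω²))·log((m + √(m²-ω²))/ω). -/
/-!
Write `t = tanh (κ x) ∈ (-1, 1)` and `s = √ν`, so that `κ = (m + ω) s` and `m - ω = κ s`.
Then `|ψ^∞|² = ν/(1-ν)² - ν(1-t²)(1+νt²)/((1-ν)(1-νt²)²)` approaches its supremum
`ν/(1-ν)² = κ²/(4ω²)` as `t → 1`. A direct computation gives `ℰ = (κ²/(4ω²)) g`, and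
`g = κ s (1-t²)/(1-s²t²)` is the derivative of `artanh (s tanh (κ x))`, so
`∫ g = 2 artanh s = log ((1+s)/(1-s)) = log ((m+κ)/ω)`.
-/

open Real Filter Topology MeasureTheory Set

theorem ciSup_eq_of_forall_le_of_tendsto {ι α : Type*} [ConditionallyCompleteLinearOrder α]
    [TopologicalSpace α] [OrderTopology α] {l : Filter ι} [l.NeBot] {f : ι → α} {a : α}
    (hle : ∀ i, f i ≤ a) (hf : Tendsto f l (𝓝 a)) : ⨆ i, f i = a :=
  haveI := l.nonempty_of_neBot
  le_antisymm (ciSup_le hle) (le_of_tendsto' hf fun i => le_ciSup ⟨a, forall_mem_range.2 hle⟩ i)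

namespace MeasureTheory

theorem integrable_of_hasDerivAt_of_nonneg {f F : ℝ → ℝ} {a b : ℝ}
    (hF : ∀ x, HasDerivAt F (f x) x) (hf : ∀ x, 0 ≤ f x)
    (hbot : Tendsto F atBot (𝓝 a)) (htop : Tendsto F atTop (𝓝 b)) : Integrable f := by
  have hint (u v : ℝ) : IntervalIntegrable f volume u v :=
    intervalIntegral.intervalIntegrable_deriv_of_nonneg
      (fun x _ => (hF x).continuousAt.continuousWithinAt) (fun x _ => hF x) fun x _ => hf x
  refine integrable_of_intervalIntegral_norm_tendsto (b - a) (fun i => (hint (-i) i).1)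
    tendsto_neg_atTop_atBot tendsto_id ((htop.sub (hbot.comp tendsto_neg_atTop_atBot)).congr
      fun i => ?_)
  simp only [Real.norm_of_nonneg (hf _), Function.comp_apply]
  exact (intervalIntegral.integral_eq_sub_of_hasDerivAt (fun x _ => hF x) (hint _ _)).symm

theorem integral_eq_sub_of_hasDerivAt_of_nonneg {f F : ℝ → ℝ} {a b : ℝ}
    (hF : ∀ x, HasDerivAt F (f x) x) (hf : ∀ x, 0 ≤ f x)
    (hbot : Tendsto F atBot (𝓝 a)) (htop : Tendsto F atTop (𝓝 b)) : ∫ x, f x = b - a :=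
  integral_of_hasDerivAt_of_tendsto hF (integrable_of_hasDerivAt_of_nonneg hF hf hbot htop)
    hbot htop

end MeasureTheory

namespace Real

theorem hasDerivAt_tanh_s7 (x : ℝ) : HasDerivAt tanh (1 - tanh x ^ 2) x := by
  have h := (hasDerivAt_sinh x).div (hasDerivAt_cosh x) (cosh_pos x).ne'
  rw [show sinh / cosh = tanh from funext fun y => (tanh_eq_sinh_div_cosh y).symm] at h
  refine h.congr_deriv ?_
  rw [tanh_eq_sinh_div_cosh]
  field_simp

theorem tanh_eq_one_sub_two_div (x : ℝ) : tanh x = 1 - 2 / (exp (2 * x) + 1) := by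
  rw [tanh_eq, show 2 * x = x + x by ring, exp_add, exp_neg]
  field_simp
  ring

theorem tendsto_tanh_atTop : Tendsto tanh atTop (𝓝 1) := by
  have h : Tendsto (fun x : ℝ => exp (2 * x) + 1) atTop atTop :=
    tendsto_atTop_add_const_right _ _ (tendsto_exp_atTop.comp (tendsto_id.const_mul_atTop two_pos))
  have := (tendsto_const_nhds (x := (1 : ℝ))).sub
    ((tendsto_const_nhds (x := (2 : ℝ))).div_atTop h)
  rw [sub_zero] at this
  exact this.congr fun x => (tanh_eq_one_sub_two_div x).symm

theorem tendsto_tanh_atBot : Tendsto tanh atBot (𝓝 (-1)) := by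
  simpa [Function.comp_def] using (tendsto_tanh_atTop.comp tendsto_neg_atBot_atTop).neg

end Real

theorem integral_mul_one_sub_tanh_sq_div {κ ν : ℝ} (hκ : 0 < κ) (hν0 : 0 ≤ ν)
    (hν1 : ν < 1) :
    ∫ x, κ * √ν * (1 - tanh (κ * x) ^ 2) / (1 - ν * tanh (κ * x) ^ 2) =
      log ((1 + √ν) / (1 - √ν)) := by
  set s := √ν
  have hs0 : 0 ≤ s := sqrt_nonneg ν
  have hs1 : s < 1 := (sqrt_lt' one_pos).2 (by rwa [one_pow])
  have hsν : s ^ 2 = ν := sq_sqrt hν0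
  have hst {t : ℝ} (ht : |t| ≤ 1) : |s * t| < 1 := by
    rw [abs_mul, abs_of_nonneg hs0]
    exact mul_lt_one_of_nonneg_of_lt_one_left hs0 hs1 ht
  set φ : ℝ → ℝ := fun t => (log (1 + s * t) - log (1 - s * t)) / 2
  have hφ {t : ℝ} (ht : |t| ≤ 1) : ContinuousAt φ t := by
    obtain ⟨h₁, h₂⟩ := abs_lt.1 (hst ht)
    have hlin : ContinuousAt (fun t => s * t) t := continuousAt_id.const_mul s
    exact (((hlin.const_add 1).log (by linarith)).sub
      ((hlin.const_sub 1).log (by linarith))).div_const 2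
  have hF (x : ℝ) : HasDerivAt (fun x => φ (tanh (κ * x)))
      (κ * s * (1 - tanh (κ * x) ^ 2) / (1 - ν * tanh (κ * x) ^ 2)) x := by
    obtain ⟨h₁, h₂⟩ := abs_lt.1 (hst (abs_tanh_lt_one (κ * x)).le)
    have hκx : HasDerivAt (fun y => κ * y) κ x :=
      (hasDerivAt_id x).const_mul κ |>.congr_deriv (mul_one κ)
    have ht : HasDerivAt (fun y => s * tanh (κ * y)) (s * ((1 - tanh (κ * x) ^ 2) * κ)) x :=
      ((hasDerivAt_tanh_s7 _).comp x hκx).const_mul s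
    refine ((((ht.const_add 1).log (by linarith)).sub
      ((ht.const_sub 1).log (by linarith))).div_const 2).congr_deriv ?_
    have h₃ : 1 - s ^ 2 * tanh (κ * x) ^ 2 ≠ 0 := by nlinarith
    rw [← hsν]
    have h₄ : 1 + s * tanh (κ * x) ≠ 0 := by linarith
    have h₅ : 1 - s * tanh (κ * x) ≠ 0 := by linarith
    field_simp
    ring
  have hnonneg (x : ℝ) :
      0 ≤ κ * s * (1 - tanh (κ * x) ^ 2) / (1 - ν * tanh (κ * x) ^ 2) := by
    have ht := (tanh_sq_lt_one (κ * x)).le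
    have := mul_lt_one_of_nonneg_of_lt_one_left hν0 hν1 ht
    exact div_nonneg (mul_nonneg (by positivity) (by linarith)) (by linarith)
  rw [integral_eq_sub_of_hasDerivAt_of_nonneg hF hnonneg
    ((hφ (by norm_num)).tendsto.comp (tendsto_tanh_atBot.comp (tendsto_id.const_mul_atBot hκ)))
    ((hφ (by norm_num)).tendsto.comp (tendsto_tanh_atTop.comp (tendsto_id.const_mul_atTop hκ))),
    log_div (by linarith) (by linarith)]
  simp only [φ, mul_one, mul_neg, ← sub_eq_add_neg, sub_neg_eq_add]
  ring

namespace DiracSoliton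

-- `ψ^∞` and `g` as functions of `t = tanh (κ x)`.

noncomputable def psi₁ (ν t : ℝ) : ℝ := √ν * t / (1 - ν * t ^ 2)

noncomputable def psi₂ (ν t : ℝ) : ℝ := -(ν / (1 - ν)) * (1 - t ^ 2) / (1 - ν * t ^ 2)

noncomputable def gProfile (m ω ν t : ℝ) : ℝ := (m - ω) * (1 - t ^ 2) / (1 - ν * t ^ 2)

variable {ν t : ℝ}

theorem one_sub_mul_sq_pos (hν0 : 0 ≤ ν) (hν1 : ν < 1) (ht : t ^ 2 ≤ 1) :
    0 < 1 - ν * t ^ 2 := by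
  nlinarith [mul_le_mul_of_nonneg_left ht hν0]

theorem psi₁_sq_add_psi₂_sq (hν0 : 0 ≤ ν) (hν1 : ν < 1) (ht : t ^ 2 ≤ 1) :
    psi₁ ν t ^ 2 + psi₂ ν t ^ 2 = ν / (1 - ν) ^ 2 -
      ν * (1 - t ^ 2) * (1 + ν * t ^ 2) / ((1 - ν) * (1 - ν * t ^ 2) ^ 2) := by
  have := (one_sub_mul_sq_pos hν0 hν1 ht).ne'
  have : 1 - ν ≠ 0 := by linarith
  rw [psi₁, psi₂, div_pow, mul_pow, sq_sqrt hν0]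
  field_simp
  ring

theorem psi₁_sq_add_psi₂_sq_le (hν0 : 0 ≤ ν) (hν1 : ν < 1) (ht : t ^ 2 ≤ 1) :
    psi₁ ν t ^ 2 + psi₂ ν t ^ 2 ≤ ν / (1 - ν) ^ 2 := by
  rw [psi₁_sq_add_psi₂_sq hν0 hν1 ht]
  refine sub_le_self _ (div_nonneg ?_ (mul_nonneg (by linarith) (sq_nonneg _)))
  exact mul_nonneg (mul_nonneg hν0 (by linarith)) (by positivity)

theorem psi₁_sq_add_psi₂_sq_one (hν0 : 0 ≤ ν) :
    psi₁ ν 1 ^ 2 + psi₂ ν 1 ^ 2 = ν / (1 - ν) ^ 2 := by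
  simp [psi₁, psi₂, div_pow, sq_sqrt hν0]

theorem iSup_sqrt_psi₁_sq_add_psi₂_sq {κ : ℝ} (hκ : 0 < κ) (hν0 : 0 ≤ ν) (hν1 : ν < 1) :
    ⨆ x, √(psi₁ ν (tanh (κ * x)) ^ 2 + psi₂ ν (tanh (κ * x)) ^ 2) =
      √ν / (1 - ν) := by
  have hmax : √(ν / (1 - ν) ^ 2) = √ν / (1 - ν) := by
    rw [sqrt_div' _ (sq_nonneg _), sqrt_sq (by linarith)]
  have hcont : ContinuousAt (fun t => √(psi₁ ν t ^ 2 + psi₂ ν t ^ 2)) 1 := by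
    have : (1 : ℝ) - ν * 1 ^ 2 ≠ 0 := by linarith
    unfold psi₁ psi₂
    fun_prop (disch := assumption)
  rw [← hmax]
  refine ciSup_eq_of_forall_le_of_tendsto (fun x => sqrt_le_sqrt ?_) ?_ (l := atTop)
  · exact psi₁_sq_add_psi₂_sq_le hν0 hν1 (tanh_sq_lt_one _).le
  · rw [← psi₁_sq_add_psi₂_sq_one hν0]
    exact hcont.tendsto.comp (tendsto_tanh_atTop.comp (tendsto_id.const_mul_atTop hκ))

theorem energy_eq {m ω : ℝ} (hω : 0 < ω) (hωm : ω < m) (hν : ν = (m - ω) / (m + ω))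
    (ht : t ^ 2 ≤ 1) :
    m * (psi₁ ν t ^ 2 + psi₂ ν t ^ 2) -
        (m - gProfile m ω ν t) * (psi₁ ν t ^ 2 - psi₂ ν t ^ 2) =
      ν / (1 - ν) ^ 2 * gProfile m ω ν t := by
  have hν0 : 0 ≤ ν := hν ▸ div_nonneg (by linarith) (by linarith)
  have hν1 : ν < 1 := hν ▸ (div_lt_one (by linarith)).2 (by linarith)
  have hD := (one_sub_mul_sq_pos hν0 hν1 ht).ne'
  have hν1' : 1 - ν ≠ 0 := by linarith
  have hm : m = ω * (1 + ν) / (1 - ν) := by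
    have : m + ω ≠ 0 := by linarith
    rw [eq_div_iff hν1', hν]
    field_simp
    ring
  clear hν
  subst hm
  rw [psi₁, psi₂, gProfile, div_pow, mul_pow, sq_sqrt hν0]
  field_simp
  ring

section Parameters

variable {m ω : ℝ} (hω : 0 < ω) (hωm : ω < m)
include hω hωm

theorem one_sub_sub_div_add : 1 - (m - ω) / (m + ω) = 2 * ω / (m + ω) := by
  have : m + ω ≠ 0 := by linarith
  field_simp
  ring

theorem sqrt_sq_sub_sq_eq_mul_sqrt : √(m ^ 2 - ω ^ 2) = (m + ω) * √((m - ω) / (m + ω)) := by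
  rw [← sqrt_sq (by linarith : 0 ≤ m + ω), ← sqrt_mul (sq_nonneg _), sqrt_sq (by linarith)]
  have : m + ω ≠ 0 := by linarith
  congr 1
  field_simp
  ring

theorem sqrt_sq_sub_sq_mul_sqrt_div : √(m ^ 2 - ω ^ 2) * √((m - ω) / (m + ω)) = m - ω := by
  rw [sqrt_sq_sub_sq_eq_mul_sqrt hω hωm, mul_assoc,
    mul_self_sqrt (div_nonneg (by linarith) (by linarith))]
  exact mul_div_cancel₀ _ (by linarith)

theorem sqrt_div_one_sub :
    √((m - ω) / (m + ω)) / (1 - (m - ω) / (m + ω)) = √(m ^ 2 - ω ^ 2) / (2 * ω) := by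
  rw [sqrt_sq_sub_sq_eq_mul_sqrt hω hωm, one_sub_sub_div_add hω hωm]
  field_simp

theorem div_one_sub_sq :
    (m - ω) / (m + ω) / (1 - (m - ω) / (m + ω)) ^ 2 = (m ^ 2 - ω ^ 2) / (4 * ω ^ 2) := by
  rw [one_sub_sub_div_add hω hωm]
  field_simp
  ring

theorem one_add_sqrt_div_one_sub_sqrt :
    (1 + √((m - ω) / (m + ω))) / (1 - √((m - ω) / (m + ω))) = (m + √(m ^ 2 - ω ^ 2)) / ω := by
  have hs : √((m - ω) / (m + ω)) ^ 2 = (m - ω) / (m + ω) :=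
    sq_sqrt (div_nonneg (by linarith) (by linarith))
  have hs1 : √((m - ω) / (m + ω)) < 1 :=
    (sqrt_lt' one_pos).2 (by rw [one_pow, div_lt_one (by linarith)]; linarith)
  rw [sqrt_sq_sub_sq_eq_mul_sqrt hω hωm, div_eq_div_iff (by linarith) hω.ne']
  rw [eq_div_iff (by linarith)] at hs
  linear_combination hs

end Parameters

end DiracSoliton

open DiracSoliton in
theorem stmt7_general (m ω κ ν : ℝ) (hω1 : 0 < ω) (hω2 : ω < m)
    (hκ : κ = Real.sqrt (m ^ 2 - ω ^ 2)) (hν : ν = (m - ω) / (m + ω))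
    (g W ψ1 ψ2 E : ℝ → ℝ)
    (hg : ∀ x, g x = (m - ω) * (1 - Real.tanh (κ * x) ^ 2) / (1 - ν * Real.tanh (κ * x) ^ 2))
    (hW : ∀ x, W x = m - g x)
    (hψ1 : ∀ x, ψ1 x = Real.sqrt ν * Real.tanh (κ * x) / (1 - ν * Real.tanh (κ * x) ^ 2))
    (hψ2 : ∀ x, ψ2 x = -(ν / (1 - ν)) * (1 - Real.tanh (κ * x) ^ 2) / (1 - ν * Real.tanh (κ * x) ^ 2))
    (hE : ∀ x, E x = m * (ψ1 x ^ 2 + ψ2 x ^ 2) - W x * (ψ1 x ^ 2 - ψ2 x ^ 2)) :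
    (⨆ x, Real.sqrt (ψ1 x ^ 2 + ψ2 x ^ 2)) = Real.sqrt (m ^ 2 - ω ^ 2) / (2 * ω) ∧
      ∫ x, E x = (m ^ 2 - ω ^ 2) / (4 * ω ^ 2) * Real.log ((m + Real.sqrt (m ^ 2 - ω ^ 2)) / ω) := by
  have hν0 : 0 ≤ ν := hν ▸ div_nonneg (by linarith) (by linarith)
  have hν1 : ν < 1 := hν ▸ (div_lt_one (by linarith)).2 (by linarith)
  have hκ0 : 0 < κ := hκ ▸ sqrt_pos.2 (by nlinarith)
  obtain rfl : ψ1 = fun x => psi₁ ν (tanh (κ * x)) := funext hψ1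
  obtain rfl : ψ2 = fun x => psi₂ ν (tanh (κ * x)) := funext hψ2
  have hEg (x : ℝ) : E x = ν / (1 - ν) ^ 2 *
      (κ * √ν * (1 - tanh (κ * x) ^ 2) / (1 - ν * tanh (κ * x) ^ 2)) := by
    rw [hE, hW, hg, ← gProfile, energy_eq hω1 hω2 hν (tanh_sq_lt_one _).le, gProfile, hκ, hν,
      sqrt_sq_sub_sq_mul_sqrt_div hω1 hω2]
  refine ⟨?_, ?_⟩
  · rw [iSup_sqrt_psi₁_sq_add_psi₂_sq hκ0 hν0 hν1, hν, sqrt_div_one_sub hω1 hω2]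
  · rw [integral_congr_ae (ae_of_all _ hEg), integral_const_mul,
      integral_mul_one_sub_tanh_sq_div hκ0 hν0 hν1, hν, div_one_sub_sq hω1 hω2,
      one_add_sqrt_div_one_sub_sqrt hω1 hω2]

theorem stmt7 (m ω κ ν : ℝ) (hm : 0 < m) (hω1 : 0 < ω) (hω2 : ω < m)
    (hκ : κ = Real.sqrt (m ^ 2 - ω ^ 2)) (hν : ν = (m - ω) / (m + ω))
    (g W ψ1 ψ2 E : ℝ → ℝ)
    (hg : ∀ x, g x = (m - ω) * (1 - Real.tanh (κ * x) ^ 2) / (1 - ν * Real.tanh (κ * x) ^ 2))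
    (hW : ∀ x, W x = m - g x)
    (hψ1 : ∀ x, ψ1 x = Real.sqrt ν * Real.tanh (κ * x) / (1 - ν * Real.tanh (κ * x) ^ 2))
    (hψ2 : ∀ x, ψ2 x = -(ν / (1 - ν)) * (1 - Real.tanh (κ * x) ^ 2) / (1 - ν * Real.tanh (κ * x) ^ 2))
    (hE : ∀ x, E x = m * (ψ1 x ^ 2 + ψ2 x ^ 2) - W x * (ψ1 x ^ 2 - ψ2 x ^ 2)) :
    (⨆ x, Real.sqrt (ψ1 x ^ 2 + ψ2 x ^ 2)) = Real.sqrt (m ^ 2 - ω ^ 2) / (2 * ω) ∧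
      ∫ x, E x = (m ^ 2 - ω ^ 2) / (4 * ω ^ 2) * Real.log ((m + Real.sqrt (m ^ 2 - ω ^ 2)) / ω) :=
  stmt7_general m ω κ ν hω1 hω2 hκ hν g W ψ1 ψ2 E hg hW hψ1 hψ2 hE
end

section
/- Let V ∈ L¹ ∩ L^∞(ℝ, ℂ^{2×2}) and let Ψ = (ψ₁, ψ₂) ∈ L^∞(ℝ, ℂ²) solve (D_m + V)Ψ = mΨ in the distributional sense. Then ψ₂ ∈ H¹(ℝ, ℂ), ψ₂' ∈ L¹(ℝ, ℂ), and ψ₁' ∈ L²(ℝ, ℂ); in particular ‖ψ₂‖₂² is bounded by (1/m)·‖Ψ‖_∞²·(1 + ‖V‖₁). -/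
/-!
Write `ψ₁' = f - 2mψ₂` and `ψ₂' = e` with `f = (VΨ)₂`, `e = -(VΨ)₁`. Both primitives are absolutely
continuous, so the product rule for `ψ₁ ψ̄₂` integrates to
`2m ∫ₐᵇ |ψ₂|² = ∫ₐᵇ (f ψ̄₂ + ψ₁ ē) - [ψ₁ ψ̄₂]ₐᵇ`.
The right-hand side is at most `2‖Ψ‖∞² + ‖Ψ‖∞ ∫ (|f| + |e|) ≤ 2‖Ψ‖∞² (1 + ‖V‖₁)` uniformly in
`a ≤ b`, which gives `ψ₂ ∈ L²` with the stated bound. The remaining claims hold because `VΨ` is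
dominated by `‖V‖ ‖Ψ‖∞ ∈ L¹ ∩ L∞`.
-/

open MeasureTheory intervalIntegral Set ComplexConjugate

theorem AbsolutelyContinuousOnInterval.congr {X : Type*} [PseudoMetricSpace X] {f g : ℝ → X}
    {a b : ℝ} (hf : AbsolutelyContinuousOnInterval f a b) (h : EqOn f g (uIcc a b)) :
    AbsolutelyContinuousOnInterval g a b := by
  refine hf.congr' (Filter.eventually_inf_principal.2 (Filter.Eventually.of_forall ?_))
  rintro ⟨n, I⟩ hI
  exact Finset.sum_congr rfl fun i hi => by rw [h (hI.1 i hi).1, h (hI.1 i hi).2]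

theorem AbsolutelyContinuousOnInterval.ofReal {f : ℝ → ℝ} {a b : ℝ}
    (hf : AbsolutelyContinuousOnInterval f a b) :
    AbsolutelyContinuousOnInterval (fun x => (f x : ℂ)) a b := by
  simpa [AbsolutelyContinuousOnInterval, Complex.isometry_ofReal.dist_eq] using hf

theorem AbsolutelyContinuousOnInterval.const_add {F : Type*} [SeminormedAddCommGroup F]
    {f : ℝ → F} {a b : ℝ} (c : F) (hf : AbsolutelyContinuousOnInterval f a b) :
    AbsolutelyContinuousOnInterval (fun x => c + f x) a b := by
  simpa [AbsolutelyContinuousOnInterval] using hf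

theorem IntervalIntegrable.absolutelyContinuousOnInterval_intervalIntegral_complex
    {g : ℝ → ℂ} {a b c : ℝ} (hg : IntervalIntegrable g volume a b) (hc : c ∈ uIcc a b) :
    AbsolutelyContinuousOnInterval (fun x => ∫ t in c..x, g t) a b := by
  have hre : IntervalIntegrable (fun t => RCLike.re (g t)) volume a b := ⟨hg.1.re, hg.2.re⟩
  have him : IntervalIntegrable (fun t => RCLike.im (g t)) volume a b := ⟨hg.1.im, hg.2.im⟩
  refine ((hre.absolutelyContinuousOnInterval_intervalIntegral hc).ofReal.add
    ((him.absolutelyContinuousOnInterval_intervalIntegral hc).ofReal.const_smul Complex.I)).congr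
    fun x hx => ?_
  have hgx : IntervalIntegrable g volume c x := hg.mono_set (uIcc_subset_uIcc hc hx)
  simp only [Pi.add_apply, intervalIntegral_re hgx, intervalIntegral_im hgx, smul_eq_mul]
  rw [mul_comm]
  exact Complex.re_add_im _

theorem IntervalIntegrable.continuousOn_of_eq_add_intervalIntegral {u g : ℝ → ℂ} {a b : ℝ}
    (hg : IntervalIntegrable g volume a b)
    (hu : ∀ x ∈ uIcc a b, u x = u a + ∫ t in a..x, g t) : ContinuousOn u (uIcc a b) :=
  ((hg.absolutelyContinuousOnInterval_intervalIntegral_complex left_mem_uIcc).const_add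
    (u a)).continuousOn.congr hu

theorem integral_mul_add_mul_eq_sub_of_eq_add_integral {u v g h : ℝ → ℂ} {a b : ℝ}
    (hg : IntervalIntegrable g volume a b) (hh : IntervalIntegrable h volume a b)
    (hu : ∀ x ∈ uIcc a b, u x = u a + ∫ t in a..x, g t)
    (hv : ∀ x ∈ uIcc a b, v x = v a + ∫ t in a..x, h t) :
    ∫ x in a..b, g x * v x + u x * h x = u b * v b - u a * v a := by
  have hu_ac : AbsolutelyContinuousOnInterval (fun x => u a + ∫ t in a..x, g t) a b :=
    (hg.absolutelyContinuousOnInterval_intervalIntegral_complex left_mem_uIcc).const_add _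
  have hv_ac : AbsolutelyContinuousOnInterval (fun x => v a + ∫ t in a..x, h t) a b :=
    (hh.absolutelyContinuousOnInterval_intervalIntegral_complex left_mem_uIcc).const_add _
  have hk : IntervalIntegrable (fun x => g x * v x + u x * h x) volume a b :=
    (hg.mul_continuousOn (hh.continuousOn_of_eq_add_intervalIntegral hv)).add
      (hh.continuousOn_mul (hg.continuousOn_of_eq_add_intervalIntegral hu))
  set P : ℝ → ℂ := fun x => (u a + ∫ t in a..x, g t) * (v a + ∫ t in a..x, h t)
    - ∫ t in a..x, g t * v t + u t * h t
  have hP_ac : AbsolutelyContinuousOnInterval P a b := (hu_ac.fun_smul hv_ac).sub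
    (hk.absolutelyContinuousOnInterval_intervalIntegral_complex left_mem_uIcc)
  have hP' : ∀ᵐ x, x ∈ uIcc a b → HasDerivAt P 0 x := by
    filter_upwards [hg.ae_hasDerivAt_integral, hh.ae_hasDerivAt_integral,
      hk.ae_hasDerivAt_integral] with x hgx hhx hkx hx
    have := (((hgx hx a left_mem_uIcc).const_add (u a)).mul
      ((hhx hx a left_mem_uIcc).const_add (v a))).sub (hkx hx a left_mem_uIcc)
    rwa [← hu x hx, ← hv x hx, sub_self] at this
  obtain ⟨C, hC⟩ := hP_ac.const_of_ae_hasDerivAt_zero hP'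
  have hPa := hC a left_mem_uIcc
  have hPb := hC b right_mem_uIcc
  simp only [P, integral_same, add_zero, sub_zero] at hPa hPb
  rw [hu b right_mem_uIcc, hv b right_mem_uIcc]
  linear_combination hPa - hPb

theorem IntervalIntegrable.conj {f : ℝ → ℂ} {a b : ℝ} (hf : IntervalIntegrable f volume a b) :
    IntervalIntegrable (fun t => conj (f t)) volume a b :=
  ⟨Complex.conjCLE.toContinuousLinearMap.integrable_comp hf.1,
    Complex.conjCLE.toContinuousLinearMap.integrable_comp hf.2⟩

section Energy

variable {u v f e : ℝ → ℂ} {m C a b : ℝ}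

theorem two_mul_intervalIntegral_norm_sq_eq
    (hf : IntervalIntegrable f volume a b) (he : IntervalIntegrable e volume a b)
    (hu : ∀ x ∈ uIcc a b, u x = u a + ∫ t in a..x, (f t - 2 * m * v t))
    (hv : ∀ x ∈ uIcc a b, v x = v a + ∫ t in a..x, e t) :
    ((2 * m * ∫ x in a..b, ‖v x‖ ^ 2 : ℝ) : ℂ)
      = (∫ x in a..b, f x * conj (v x) + u x * conj (e x))
        - (u b * conj (v b) - u a * conj (v a)) := by
  have hv_cont := he.continuousOn_of_eq_add_intervalIntegral hv
  have hv_conj : ∀ x ∈ uIcc a b, conj (v x) = conj (v a) + ∫ t in a..x, conj (e t) :=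
    fun x hx => by rw [intervalIntegral_conj, ← map_add, ← hv x hx]
  have hg : IntervalIntegrable (fun t => f t - 2 * m * v t) volume a b :=
    hf.sub (hv_cont.intervalIntegrable.const_mul _)
  have hparts := integral_mul_add_mul_eq_sub_of_eq_add_integral hg he.conj hu hv_conj
  have hW : IntervalIntegrable (fun x => f x * conj (v x) + u x * conj (e x)) volume a b :=
    (hf.mul_continuousOn (Complex.continuous_conj.comp_continuousOn hv_cont)).add
      (he.conj.continuousOn_mul (hg.continuousOn_of_eq_add_intervalIntegral hu))
  have hsq : IntervalIntegrable (fun x => ((‖v x‖ ^ 2 : ℝ) : ℂ)) volume a b :=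
    (Complex.continuous_ofReal.comp_continuousOn (hv_cont.norm.pow 2)).intervalIntegrable
  have hsplit : ∫ x in a..b, (f x - 2 * m * v x) * conj (v x) + u x * conj (e x)
      = (∫ x in a..b, f x * conj (v x) + u x * conj (e x))
        - 2 * m * ((∫ x in a..b, ‖v x‖ ^ 2 : ℝ) : ℂ) := by
    rw [← intervalIntegral.integral_ofReal, ← intervalIntegral.integral_const_mul,
      ← intervalIntegral.integral_sub hW (hsq.const_mul _)]
    refine intervalIntegral.integral_congr fun x _ => ?_
    simp only [← Complex.normSq_eq_norm_sq, ← Complex.mul_conj]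
    ring
  push_cast
  linear_combination hsplit - hparts

theorem two_mul_intervalIntegral_norm_sq_le (hab : a ≤ b)
    (hf : IntervalIntegrable f volume a b) (he : IntervalIntegrable e volume a b)
    (hu : ∀ x ∈ uIcc a b, u x = u a + ∫ t in a..x, (f t - 2 * m * v t))
    (hv : ∀ x ∈ uIcc a b, v x = v a + ∫ t in a..x, e t)
    (hu_le : ∀ x, ‖u x‖ ≤ C) (hv_le : ∀ x, ‖v x‖ ≤ C) :
    2 * m * ∫ x in a..b, ‖v x‖ ^ 2 ≤ 2 * C ^ 2 + C * ∫ x in a..b, ‖f x‖ + ‖e x‖ := by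
  have hC : 0 ≤ C := (norm_nonneg _).trans (hu_le a)
  have huv : ∀ x y, ‖u x * conj (v y)‖ ≤ C * C := fun x y => by
    simpa [Complex.norm_conj] using mul_le_mul (hu_le x) (hv_le y) (norm_nonneg _) hC
  have hW_le : ∀ x, ‖f x * conj (v x) + u x * conj (e x)‖ ≤ C * (‖f x‖ + ‖e x‖) := fun x => by
    calc _ ≤ ‖f x‖ * ‖v x‖ + ‖u x‖ * ‖e x‖ := by
          simpa [Complex.norm_conj] using norm_add_le (f x * conj (v x)) (u x * conj (e x))
      _ ≤ ‖f x‖ * C + C * ‖e x‖ := by gcongr <;> simp [hu_le, hv_le]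
      _ = C * (‖f x‖ + ‖e x‖) := by ring
  calc 2 * m * ∫ x in a..b, ‖v x‖ ^ 2
      ≤ ‖((2 * m * ∫ x in a..b, ‖v x‖ ^ 2 : ℝ) : ℂ)‖ := by
        rw [Complex.norm_real]; exact le_abs_self _
    _ ≤ ‖∫ x in a..b, f x * conj (v x) + u x * conj (e x)‖
          + (‖u b * conj (v b)‖ + ‖u a * conj (v a)‖) := by
        rw [two_mul_intervalIntegral_norm_sq_eq hf he hu hv]
        exact (norm_sub_le _ _).trans (by gcongr; exact norm_sub_le _ _)
    _ ≤ C * (∫ x in a..b, ‖f x‖ + ‖e x‖) + (C * C + C * C) := by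
        gcongr
        · rw [← intervalIntegral.integral_const_mul]
          exact norm_integral_le_of_norm_le hab (Filter.Eventually.of_forall fun x _ => hW_le x)
            ((hf.norm.add he.norm).const_mul C)
        all_goals exact huv _ _
    _ = 2 * C ^ 2 + C * ∫ x in a..b, ‖f x‖ + ‖e x‖ := by ring

end Energy

theorem eq_add_intervalIntegral_of_eq_add_intervalIntegral {E : Type*} [NormedAddCommGroup E]
    [NormedSpace ℝ E] {u g : ℝ → E} {c : ℝ} (hg : ∀ x y, IntervalIntegrable g volume x y)
    (hu : ∀ x, u x = u c + ∫ t in c..x, g t) (a x : ℝ) :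
    u x = u a + ∫ t in a..x, g t := by
  rw [hu x, hu a, add_assoc, integral_add_adjacent_intervals (hg c a) (hg a x)]

theorem integrable_and_integral_le_of_intervalIntegral_le {f : ℝ → ℝ} {K : ℝ}
    (hf0 : ∀ x, 0 ≤ f x) (hf : ∀ a b, IntervalIntegrable f volume a b)
    (hK : ∀ a b, a ≤ b → ∫ x in a..b, f x ≤ K) :
    Integrable f ∧ ∫ x, f x ≤ K := by
  have hK' : ∀ᶠ r in Filter.atTop, ∫ x in -r..r, f x ≤ K := by
    filter_upwards [Filter.eventually_ge_atTop 0] with r hr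
    exact hK _ _ (by linarith)
  have hint : Integrable f := by
    refine integrable_of_intervalIntegral_norm_bounded K (fun r => (hf (-r) r).1)
      Filter.tendsto_neg_atTop_atBot Filter.tendsto_id ?_
    simpa only [Real.norm_of_nonneg (hf0 _)] using hK'
  exact ⟨hint, le_of_tendsto
    (intervalIntegral_tendsto_integral hint Filter.tendsto_neg_atTop_atBot Filter.tendsto_id) hK'⟩

theorem memLp_two_and_two_mul_integral_norm_sq_le {u v f e : ℝ → ℂ} {m C : ℝ} (hm : 0 < m)
    (hf : Integrable f) (he : Integrable e)
    (hu : ∀ x, u x = u 0 + ∫ t in (0 : ℝ)..x, (f t - 2 * m * v t))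
    (hv : ∀ x, v x = v 0 + ∫ t in (0 : ℝ)..x, e t)
    (hu_le : ∀ x, ‖u x‖ ≤ C) (hv_le : ∀ x, ‖v x‖ ≤ C) :
    MemLp v 2 volume ∧ 2 * m * ∫ x, ‖v x‖ ^ 2 ≤ 2 * C ^ 2 + C * ∫ x, ‖f x‖ + ‖e x‖ := by
  have hC : 0 ≤ C := (norm_nonneg _).trans (hu_le 0)
  have hv_cont : Continuous v :=
    (continuous_const.add (he.continuous_primitive 0)).congr fun x => (hv x).symm
  have hg : ∀ x y, IntervalIntegrable (fun t => f t - 2 * m * v t) volume x y := fun x y =>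
    hf.intervalIntegrable.sub ((continuous_const.mul hv_cont).intervalIntegrable x y)
  have hlocal : ∀ a b, a ≤ b →
      ∫ x in a..b, ‖v x‖ ^ 2 ≤ (2 * C ^ 2 + C * ∫ x, ‖f x‖ + ‖e x‖) / (2 * m) := by
    intro a b hab
    rw [le_div_iff₀ (by positivity), mul_comm]
    refine (two_mul_intervalIntegral_norm_sq_le hab hf.intervalIntegrable he.intervalIntegrable
      (fun x _ => eq_add_intervalIntegral_of_eq_add_intervalIntegral hg hu a x)
      (fun x _ => eq_add_intervalIntegral_of_eq_add_intervalIntegral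
        (fun _ _ => he.intervalIntegrable) hv a x) hu_le hv_le).trans ?_
    gcongr
    rw [intervalIntegral.integral_of_le hab]
    exact setIntegral_le_integral (hf.norm.add he.norm)
      (Filter.Eventually.of_forall fun x => by positivity)
  obtain ⟨hint, hle⟩ := integrable_and_integral_le_of_intervalIntegral_le
    (fun x => sq_nonneg ‖v x‖) (fun a b => (hv_cont.norm.pow 2).intervalIntegrable a b) hlocal
  refine ⟨(memLp_two_iff_integrable_sq_norm hv_cont.aestronglyMeasurable).2 hint, ?_⟩
  rwa [le_div_iff₀ (by positivity), mul_comm] at hle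

theorem memLp_two_of_norm_le_of_integrable_of_le {α E : Type*} [MeasurableSpace α]
    {μ : Measure α} [NormedAddCommGroup E] {f : α → E} {w : α → ℝ} {M : ℝ}
    (hf : AEStronglyMeasurable f μ) (hw : Integrable w μ) (hwM : ∀ x, w x ≤ M)
    (hfw : ∀ x, ‖f x‖ ≤ w x) : MemLp f 2 μ := by
  refine (memLp_two_iff_integrable_sq_norm hf).2 <|
    (hw.const_mul M).mono' (hf.norm.pow 2) (Filter.Eventually.of_forall fun x => ?_)
  have := norm_nonneg (f x)
  rw [Real.norm_of_nonneg (by positivity)]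
  nlinarith [hfw x, hwM x]

/-- If `V ∈ L¹ ∩ L^∞` and `Ψ = (ψ₁, ψ₂) ∈ L^∞` solves `(D_m + V)Ψ = mΨ` distributionally
(equivalently `ψ₁' = (VΨ)₂ - 2mψ₂`, `ψ₂' = -(VΨ)₁` in integral form), then
`ψ₂ ∈ H¹`, `ψ₂' ∈ L¹`, `ψ₁' ∈ L²`, and `∫|ψ₂|² ≤ (1/m)‖Ψ‖_∞²(1 + ‖V‖₁)`. -/
theorem stmt14 (m : ℝ) (hm : 0 < m)
    (V : ℝ → (Fin 2 → ℂ) →L[ℂ] (Fin 2 → ℂ)) (CV CΨ : ℝ)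
    (hVinf : ∀ x, ‖V x‖ ≤ CV)
    (hV1 : Integrable (fun x => ‖V x‖) volume)
    (ψ1 ψ2 : ℝ → ℂ)
    (hΨ : ∀ x, ‖(![ψ1 x, ψ2 x] : Fin 2 → ℂ)‖ ≤ CΨ)
    (hmeas : AEStronglyMeasurable (fun t => V t ![ψ1 t, ψ2 t]) volume)
    (heq1 : ∀ x, ψ1 x = ψ1 0 +
      ∫ t in (0:ℝ)..x, (V t ![ψ1 t, ψ2 t] 1 - 2 * (m : ℂ) * ψ2 t))
    (heq2 : ∀ x, ψ2 x = ψ2 0 + ∫ t in (0:ℝ)..x, (-(V t ![ψ1 t, ψ2 t] 0))) :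
    MemLp ψ2 2 volume ∧
      MemLp (fun t => -(V t ![ψ1 t, ψ2 t] 0)) 2 volume ∧
      Integrable (fun t => -(V t ![ψ1 t, ψ2 t] 0)) volume ∧
      MemLp (fun t => V t ![ψ1 t, ψ2 t] 1 - 2 * (m : ℂ) * ψ2 t) 2 volume ∧
      (∫ x, ‖ψ2 x‖ ^ 2) ≤ 1 / m * CΨ ^ 2 * (1 + ∫ x, ‖V x‖) := by
  have hψ1 : ∀ x, ‖ψ1 x‖ ≤ CΨ := fun x => by simpa using (norm_le_pi_norm _ 0).trans (hΨ x)
  have hψ2 : ∀ x, ‖ψ2 x‖ ≤ CΨ := fun x => by simpa using (norm_le_pi_norm _ 1).trans (hΨ x)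
  have hCΨ : 0 ≤ CΨ := (norm_nonneg _).trans (hψ1 0)
  have hVΨ : ∀ i t, ‖V t ![ψ1 t, ψ2 t] i‖ ≤ ‖V t‖ * CΨ := fun i t =>
    (norm_le_pi_norm _ i).trans (((V t).le_opNorm _).trans (by gcongr; exact hΨ t))
  have hVΨ_meas : ∀ i, AEStronglyMeasurable (fun t => V t ![ψ1 t, ψ2 t] i) volume := fun i =>
    (continuous_apply i).comp_aestronglyMeasurable hmeas
  have hVΨ_int : ∀ i, Integrable (fun t => V t ![ψ1 t, ψ2 t] i) volume := fun i =>
    (hV1.mul_const CΨ).mono' (hVΨ_meas i) (Filter.Eventually.of_forall (hVΨ i))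
  have hVΨ_L2 : ∀ i, MemLp (fun t => V t ![ψ1 t, ψ2 t] i) 2 volume := fun i =>
    memLp_two_of_norm_le_of_integrable_of_le (hVΨ_meas i) (hV1.mul_const CΨ)
      (fun t => mul_le_mul_of_nonneg_right (hVinf t) hCΨ) (hVΨ i)
  obtain ⟨hψ2_L2, henergy⟩ := memLp_two_and_two_mul_integral_norm_sq_le hm (hVΨ_int 1)
    (hVΨ_int 0).neg heq1 heq2 hψ1 hψ2
  have hsource : ∫ x, ‖V x ![ψ1 x, ψ2 x] 1‖ + ‖-V x ![ψ1 x, ψ2 x] 0‖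
      ≤ 2 * CΨ * ∫ x, ‖V x‖ := by
    rw [← MeasureTheory.integral_const_mul]
    refine integral_mono ((hVΨ_int 1).norm.add (hVΨ_int 0).neg.norm) (hV1.const_mul _) fun x => ?_
    simp only [norm_neg]
    linarith [hVΨ 0 x, hVΨ 1 x]
  refine ⟨hψ2_L2, (hVΨ_L2 0).neg, (hVΨ_int 0).neg, (hVΨ_L2 1).sub (hψ2_L2.const_mul _), ?_⟩
  simp only [Pi.neg_apply] at henergy
  rw [show 1 / m * CΨ ^ 2 * (1 + ∫ x, ‖V x‖) = CΨ ^ 2 * (1 + ∫ x, ‖V x‖) / m by ring,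
    le_div_iff₀ hm]
  nlinarith [mul_le_mul_of_nonneg_left hsource hCΨ]
end

section
/- Let V ∈ L¹ ∩ L^∞(ℝ, ℂ^{2×2}) with |V(x)| ≲ ⟨x⟩^{-1-ε} for some ε > 0, and let Ψ = (ψ₁, ψ₂) ∈ L^∞(ℝ, ℂ²) solve (D_m + V)Ψ = mΨ distributionally. Then |ψ₂(x)| ≲ ⟨x⟩^{-ε/2}/√ε for all x ∈ ℝ. -/
/-! Since `ψ₂' = -(VΨ)₁` is integrable, `ψ₂` has a limit `L` at `+∞`. The first equation gives
`2m ∫₀ˣ ψ₂ = ∫₀ˣ (VΨ)₂ - (ψ₁ x - ψ₁ 0)`, which stays bounded, while `∫₀ˣ ψ₂ ≈ x L`; hence `L = 0`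
and `ψ₂ x = ∫ₓ^∞ (VΨ)₁`. For `0 ≤ x ≤ t` one has `⟨t⟩^(-1-ε) ≤ ⟨x⟩^(-ε/2) ⟨t⟩^(-1-ε/2)`, and the
last factor is integrable, which gives the decay on `x ≥ 0`; reflecting `x ↦ -x` gives `x ≤ 0`. -/

open Real MeasureTheory intervalIntegral Filter Topology Set

lemma integrable_sqrt_one_add_sq_rpow_neg {s : ℝ} (hs : 1 < s) :
    Integrable (fun t : ℝ => √(1 + t ^ 2) ^ (-s)) := by
  refine (integrable_rpow_neg_one_add_norm_sq (E := ℝ) (μ := volume) (by simpa using hs)).congr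
    (.of_forall fun t => ?_)
  simp only [norm_eq_abs, sq_abs]
  rw [sqrt_eq_rpow, ← rpow_mul (by positivity)]
  ring_nf

lemma sqrt_one_add_sq_rpow_neg_le {ε x t : ℝ} (hε : 0 < ε) (hx : 0 ≤ x) (hxt : x ≤ t) :
    √(1 + t ^ 2) ^ (-(1 + ε)) ≤ √(1 + x ^ 2) ^ (-(ε / 2)) * √(1 + t ^ 2) ^ (-(1 + ε / 2)) := by
  have hx1 : 0 < √(1 + x ^ 2) := sqrt_pos.2 (by positivity)
  have hxt' : √(1 + x ^ 2) ≤ √(1 + t ^ 2) := sqrt_le_sqrt (by nlinarith)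
  calc √(1 + t ^ 2) ^ (-(1 + ε))
      = √(1 + t ^ 2) ^ (-(ε / 2)) * √(1 + t ^ 2) ^ (-(1 + ε / 2)) := by
        rw [← rpow_add (hx1.trans_le hxt')]; ring_nf
    _ ≤ √(1 + x ^ 2) ^ (-(ε / 2)) * √(1 + t ^ 2) ^ (-(1 + ε / 2)) := by
        gcongr ?_ * _
        exact rpow_le_rpow_of_nonpos hx1 hxt' (by linarith)

section

variable {E : Type*} [NormedAddCommGroup E] [NormedSpace ℝ E]

lemma norm_setIntegral_Ioi_le_of_decay {f : ℝ → E} {D ε x : ℝ} (hε : 0 < ε) (hx : 0 ≤ x)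
    (hfD : ∀ t, ‖f t‖ ≤ D * √(1 + t ^ 2) ^ (-(1 + ε))) :
    ‖∫ t in Ioi x, f t‖ ≤
      D * (∫ t, √(1 + t ^ 2) ^ (-(1 + ε / 2))) * √(1 + x ^ 2) ^ (-(ε / 2)) := by
  have hD : 0 ≤ D := by simpa using (norm_nonneg _).trans (hfD 0)
  have hK := (integrable_sqrt_one_add_sq_rpow_neg (s := 1 + ε / 2) (by linarith)).const_mul
    (D * √(1 + x ^ 2) ^ (-(ε / 2)))
  calc ‖∫ t in Ioi x, f t‖
      ≤ ∫ t in Ioi x, D * √(1 + x ^ 2) ^ (-(ε / 2)) * √(1 + t ^ 2) ^ (-(1 + ε / 2)) := by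
        refine norm_integral_le_of_norm_le hK.integrableOn
          (ae_restrict_of_forall_mem measurableSet_Ioi fun t ht => ?_)
        rw [mul_assoc]
        exact (hfD t).trans (mul_le_mul_of_nonneg_left
          (sqrt_one_add_sq_rpow_neg_le hε hx (le_of_lt ht)) hD)
    _ ≤ ∫ t, D * √(1 + x ^ 2) ^ (-(ε / 2)) * √(1 + t ^ 2) ^ (-(1 + ε / 2)) :=
        setIntegral_le_integral hK (.of_forall fun t => by positivity)
    _ = D * (∫ t, √(1 + t ^ 2) ^ (-(1 + ε / 2))) * √(1 + x ^ 2) ^ (-(ε / 2)) := by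
        rw [MeasureTheory.integral_const_mul]; ring

lemma eq_zero_of_tendsto_of_norm_integral_le [CompleteSpace E] {u : ℝ → E} {L : E} {M : ℝ}
    (hu : Continuous u) (hlim : Tendsto u atTop (𝓝 L)) (hM : ∀ x, 0 ≤ x → ‖∫ t in (0 : ℝ)..x, u t‖ ≤ M) :
    L = 0 := by
  by_contra hL
  have hL' : 0 < ‖L‖ / 2 := by positivity
  obtain ⟨R, hR⟩ := Metric.tendsto_atTop.1 hlim _ hL'
  set R' := max R 0
  set A := ‖∫ t in (0 : ℝ)..R', u t‖
  have hgrowth : ∀ x, R' ≤ x → (x - R') * (‖L‖ / 2) - A ≤ ‖∫ t in (0 : ℝ)..x, u t‖ := by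
    intro x hx
    have hsplit : ∫ t in (0 : ℝ)..x, u t =
        (∫ t in (0 : ℝ)..R', u t) + (∫ t in R'..x, (u t - L)) + (x - R') • L := by
      rw [integral_sub (hu.intervalIntegrable _ _) intervalIntegrable_const,
        intervalIntegral.integral_const, add_assoc, sub_add_cancel, integral_add_adjacent_intervals
          (hu.intervalIntegrable _ _) (hu.intervalIntegrable _ _)]
    have htail : ‖∫ t in R'..x, (u t - L)‖ ≤ ‖L‖ / 2 * (x - R') := by
      have := norm_integral_le_of_norm_le_const fun t ht => (dist_eq_norm (u t) L ▸
        hR t ((le_max_left _ _).trans (uIoc_of_le hx ▸ ht).1.le)).le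
      rwa [abs_of_nonneg (sub_nonneg.2 hx)] at this
    have hlin : ‖(x - R') • L‖ = (x - R') * ‖L‖ := by
      rw [norm_smul, norm_eq_abs, abs_of_nonneg (sub_nonneg.2 hx)]
    rw [hsplit]
    have h1 := norm_sub_le ((∫ t in (0 : ℝ)..R', u t) + (∫ t in R'..x, (u t - L)) + (x - R') • L)
      ((∫ t in (0 : ℝ)..R', u t) + (∫ t in R'..x, (u t - L)))
    have h2 := norm_add_le (∫ t in (0 : ℝ)..R', u t) (∫ t in R'..x, (u t - L))
    rw [add_sub_cancel_left, hlin] at h1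
    linarith
  set x := R' + (M + A + 1) / (‖L‖ / 2)
  have hx : R' ≤ x := le_add_of_nonneg_right (div_nonneg (by
    linarith [(norm_nonneg _).trans (hM 0 le_rfl), norm_nonneg (∫ t in (0 : ℝ)..R', u t)])
    hL'.le)
  have := (hgrowth x hx).trans (hM x ((le_max_right _ _).trans hx))
  rw [add_sub_cancel_left, div_mul_cancel₀ _ hL'.ne'] at this
  linarith

lemma continuous_of_eq_integral {ψ f : ℝ → E} (hf : Integrable f)
    (hψ : ∀ x, ψ x = ψ 0 + ∫ t in (0 : ℝ)..x, f t) : Continuous ψ :=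
  (continuous_const.add (hf.continuous_primitive 0)).congr fun x => (hψ x).symm

lemma integral_neg_comp_neg (f : ℝ → E) (x : ℝ) :
    ∫ t in (0 : ℝ)..x, -f (-t) = ∫ t in (0 : ℝ)..-x, f t := by
  rw [intervalIntegral.integral_neg, integral_comp_neg, neg_zero, integral_symm, neg_neg]

variable [CompleteSpace E] {ψ f : ℝ → E} {D ε M : ℝ}

lemma norm_le_of_eq_integral_of_decay_of_nonneg (hε : 0 < ε) (hf : Integrable f)
    (hfD : ∀ t, ‖f t‖ ≤ D * √(1 + t ^ 2) ^ (-(1 + ε)))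
    (hψ : ∀ x, ψ x = ψ 0 + ∫ t in (0 : ℝ)..x, f t)
    (hM : ∀ x, 0 ≤ x → ‖∫ t in (0 : ℝ)..x, ψ t‖ ≤ M) {x : ℝ} (hx : 0 ≤ x) :
    ‖ψ x‖ ≤ D * (∫ t, √(1 + t ^ 2) ^ (-(1 + ε / 2))) * √(1 + x ^ 2) ^ (-(ε / 2)) := by
  have htail : ψ x = (ψ 0 + ∫ t in Ioi 0, f t) - ∫ t in Ioi x, f t := by
    rw [hψ x, ← integral_interval_add_Ioi (a := 0) (b := x) hf.integrableOn hf.integrableOn]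
    abel
  have hlim : Tendsto ψ atTop (𝓝 (ψ 0 + ∫ t in Ioi 0, f t)) :=
    ((intervalIntegral_tendsto_integral_Ioi 0 hf.integrableOn tendsto_id).const_add (ψ 0)).congr
      fun x => (hψ x).symm
  rw [htail, eq_zero_of_tendsto_of_norm_integral_le (continuous_of_eq_integral hf hψ) hlim hM,
    zero_sub, norm_neg]
  exact norm_setIntegral_Ioi_le_of_decay hε hx hfD

lemma norm_le_of_eq_integral_of_decay (hε : 0 < ε) (hf : Integrable f)
    (hfD : ∀ t, ‖f t‖ ≤ D * √(1 + t ^ 2) ^ (-(1 + ε)))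
    (hψ : ∀ x, ψ x = ψ 0 + ∫ t in (0 : ℝ)..x, f t)
    (hM : ∀ x, ‖∫ t in (0 : ℝ)..x, ψ t‖ ≤ M) (x : ℝ) :
    ‖ψ x‖ ≤ D * (∫ t, √(1 + t ^ 2) ^ (-(1 + ε / 2))) * √(1 + x ^ 2) ^ (-(ε / 2)) := by
  rcases le_total 0 x with hx | hx
  · exact norm_le_of_eq_integral_of_decay_of_nonneg hε hf hfD hψ (fun x _ => hM x) hx
  have hreflect := norm_le_of_eq_integral_of_decay_of_nonneg (ψ := fun t => ψ (-t))
    (f := fun t => -f (-t)) hε hf.comp_neg.neg (fun t => by simpa [neg_sq] using hfD (-t))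
    (fun x => by rw [integral_neg_comp_neg, neg_zero]; exact hψ (-x))
    (fun x _ => by rw [integral_comp_neg, integral_symm, norm_neg, neg_zero]; exact hM (-x))
    (neg_nonneg.2 hx)
  simpa [neg_sq] using hreflect

end

lemma norm_integral_le_of_eq_integral_sub_mul {ψ₁ ψ₂ g : ℝ → ℂ} {c : ℂ} {B : ℝ} (hc : c ≠ 0)
    (hg : Integrable g) (hψ₂ : Continuous ψ₂) (hB : ∀ x, ‖ψ₁ x‖ ≤ B)
    (hψ₁ : ∀ x, ψ₁ x = ψ₁ 0 + ∫ t in (0 : ℝ)..x, (g t - c * ψ₂ t)) (x : ℝ) :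
    ‖∫ t in (0 : ℝ)..x, ψ₂ t‖ ≤ (2 * B + ∫ t, ‖g t‖) / ‖c‖ := by
  have hprim : c * ∫ t in (0 : ℝ)..x, ψ₂ t = (∫ t in (0 : ℝ)..x, g t) - (ψ₁ x - ψ₁ 0) := by
    rw [hψ₁ x, integral_sub hg.intervalIntegrable (hψ₂.intervalIntegrable _ _ |>.const_mul c),
      intervalIntegral.integral_const_mul]
    ring
  have hg' : ‖∫ t in (0 : ℝ)..x, g t‖ ≤ ∫ t, ‖g t‖ :=
    (norm_integral_le_integral_norm_uIoc).trans
      (setIntegral_le_integral hg.norm (.of_forall fun _ => norm_nonneg _))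
  rw [le_div_iff₀ (norm_pos_iff.2 hc), mul_comm, ← norm_mul, hprim]
  linarith [norm_sub_le (∫ t in (0 : ℝ)..x, g t) (ψ₁ x - ψ₁ 0), norm_sub_le (ψ₁ x) (ψ₁ 0),
    hB x, hB 0]

theorem stmt15_general (m ε : ℝ) (hm : 0 < m) (hε : 0 < ε)
    (V : ℝ → (Fin 2 → ℂ) →L[ℂ] (Fin 2 → ℂ)) (CΨ : ℝ)
    (hVdecay : ∃ C, ∀ x, ‖V x‖ ≤ C * Real.sqrt (1 + x ^ 2) ^ (-(1 + ε)))
    (ψ1 ψ2 : ℝ → ℂ)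
    (hΨ : ∀ x, ‖(![ψ1 x, ψ2 x] : Fin 2 → ℂ)‖ ≤ CΨ)
    (hmeas : AEStronglyMeasurable (fun t => V t ![ψ1 t, ψ2 t]) volume)
    (heq1 : ∀ x, ψ1 x = ψ1 0 +
      ∫ t in (0:ℝ)..x, (V t ![ψ1 t, ψ2 t] 1 - 2 * (m : ℂ) * ψ2 t))
    (heq2 : ∀ x, ψ2 x = ψ2 0 + ∫ t in (0:ℝ)..x, (-(V t ![ψ1 t, ψ2 t] 0))) :
    ∃ C', ∀ x, ‖ψ2 x‖ ≤ C' * Real.sqrt (1 + x ^ 2) ^ (-(ε / 2)) / Real.sqrt ε := by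
  obtain ⟨C, hC⟩ := hVdecay
  have hVΨ (t : ℝ) (i : Fin 2) :
      ‖V t ![ψ1 t, ψ2 t] i‖ ≤ C * CΨ * √(1 + t ^ 2) ^ (-(1 + ε)) :=
    calc ‖V t ![ψ1 t, ψ2 t] i‖ ≤ ‖V t‖ * ‖(![ψ1 t, ψ2 t] : Fin 2 → ℂ)‖ :=
          (norm_le_pi_norm _ i).trans ((V t).le_opNorm _)
      _ ≤ C * √(1 + t ^ 2) ^ (-(1 + ε)) * CΨ :=
          mul_le_mul (hC t) (hΨ t) (norm_nonneg _) ((norm_nonneg _).trans (hC t))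
      _ = C * CΨ * √(1 + t ^ 2) ^ (-(1 + ε)) := by ring
  have hint (i : Fin 2) : Integrable fun t => V t ![ψ1 t, ψ2 t] i :=
    ((integrable_sqrt_one_add_sq_rpow_neg (by linarith)).const_mul (C * CΨ)).mono'
      ((continuous_apply i).comp_aestronglyMeasurable hmeas) (.of_forall (hVΨ · i))
  have hM := norm_integral_le_of_eq_integral_sub_mul (c := 2 * m) (by simp [hm.ne']) (hint 1)
    (continuous_of_eq_integral (hint 0).neg heq2)
    (fun x => (norm_le_pi_norm ![ψ1 x, ψ2 x] 0).trans (hΨ x)) heq1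
  refine ⟨C * CΨ * (∫ t, √(1 + t ^ 2) ^ (-(1 + ε / 2))) * √ε, fun x => ?_⟩
  rw [mul_right_comm, mul_div_cancel_right₀ _ (sqrt_pos.2 hε).ne']
  exact norm_le_of_eq_integral_of_decay hε (hint 0).neg
    (fun t => (norm_neg _).trans_le (hVΨ t 0)) heq2 hM x

/-- If moreover `|V(x)| ≲ ⟨x⟩^{-1-ε}`, then `|ψ₂(x)| ≲ ⟨x⟩^{-ε/2}/√ε`. -/
theorem stmt15 (m ε : ℝ) (hm : 0 < m) (hε : 0 < ε)
    (V : ℝ → (Fin 2 → ℂ) →L[ℂ] (Fin 2 → ℂ)) (CV CΨ : ℝ)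
    (hVinf : ∀ x, ‖V x‖ ≤ CV)
    (hV1 : Integrable (fun x => ‖V x‖) volume)
    (hVdecay : ∃ C, ∀ x, ‖V x‖ ≤ C * Real.sqrt (1 + x ^ 2) ^ (-(1 + ε)))
    (ψ1 ψ2 : ℝ → ℂ)
    (hΨ : ∀ x, ‖(![ψ1 x, ψ2 x] : Fin 2 → ℂ)‖ ≤ CΨ)
    (hmeas : AEStronglyMeasurable (fun t => V t ![ψ1 t, ψ2 t]) volume)
    (heq1 : ∀ x, ψ1 x = ψ1 0 +
      ∫ t in (0:ℝ)..x, (V t ![ψ1 t, ψ2 t] 1 - 2 * (m : ℂ) * ψ2 t))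
    (heq2 : ∀ x, ψ2 x = ψ2 0 + ∫ t in (0:ℝ)..x, (-(V t ![ψ1 t, ψ2 t] 0))) :
    ∃ C', ∀ x, ‖ψ2 x‖ ≤ C' * Real.sqrt (1 + x ^ 2) ^ (-(ε / 2)) / Real.sqrt ε :=
  stmt15_general m ε hm hε V CΨ hVdecay ψ1 ψ2 hΨ hmeas heq1 heq2
end

section
/- Let V ∈ L¹ ∩ L^∞(ℝ, ℂ^{2×2}) with |V(x)| ≲ ⟨x⟩^{-3-ε} for some ε > 0, and let Ψ = (ψ₁, ψ₂) ∈ L^∞(ℝ, ℂ²) solve (D_m + V)Ψ = mΨ distributionally. Then ψ₂ ∈ L¹(ℝ, ℂ), the limits l_± := lim_{x→±∞} ψ₁(x) exist, and ψ₁ - l_+χ_{(0,∞)} - l_-χ_{(-∞,0)} decays like ⟨x⟩^{-ε/2}. -/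
/-! Both equations have the form `ρ' = w` with `|w(t)| ≲ ⟨t⟩^{-p}`, so `ρ` converges at `±∞` and
differs from its limits by tail integrals of `w`, which are `O(⟨x⟩^{-q})` for `q < p - 1`.
For `ψ₂` we have `p = 3 + ε`. Solving the first equation for `2mψ₂` shows that the primitives of
`ψ₂` are bounded, which forces both limits of `ψ₂` to vanish; so `ψ₂` is itself a tail integral,
`O(⟨x⟩^{-2-ε/2})`, and in particular integrable. Then `ψ₁' = (iσ₂VΨ)₁ - 2mψ₂` is
`O(⟨t⟩^{-2-ε/2})`, and the same tail estimate gives the limits of `ψ₁` with a remainder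
`O(⟨x⟩^{-ε/2})`. -/

open Real MeasureTheory intervalIntegral Filter Topology Set

noncomputable def japaneseBracket (x : ℝ) : ℝ := √(1 + x ^ 2)

lemma one_le_japaneseBracket (x : ℝ) : 1 ≤ japaneseBracket x :=
  Real.one_le_sqrt.2 (le_add_of_nonneg_right (sq_nonneg x))

lemma japaneseBracket_pos (x : ℝ) : 0 < japaneseBracket x :=
  one_pos.trans_le (one_le_japaneseBracket x)

@[simp] lemma japaneseBracket_zero : japaneseBracket 0 = 1 := by
  simp [japaneseBracket]

lemma japaneseBracket_rpow_pos (p x : ℝ) : 0 < japaneseBracket x ^ p :=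
  rpow_pos_of_pos (japaneseBracket_pos x) p

lemma japaneseBracket_rpow_neg_le_of_le {p q : ℝ} (hqp : q ≤ p) (x : ℝ) :
    japaneseBracket x ^ (-p) ≤ japaneseBracket x ^ (-q) :=
  rpow_le_rpow_of_exponent_le (one_le_japaneseBracket x) (neg_le_neg hqp)

lemma japaneseBracket_rpow_neg_le_of_abs_le {q x t : ℝ} (hq : 0 ≤ q) (hxt : |x| ≤ |t|) :
    japaneseBracket t ^ (-q) ≤ japaneseBracket x ^ (-q) := by
  refine rpow_le_rpow_of_nonpos (japaneseBracket_pos x) (sqrt_le_sqrt ?_) (neg_nonpos.2 hq)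
  simpa [sq_abs] using add_le_add_left (pow_le_pow_left₀ (abs_nonneg x) hxt 2) 1

lemma integrable_japaneseBracket_rpow_neg {r : ℝ} (hr : 1 < r) :
    Integrable fun t => japaneseBracket t ^ (-r) := by
  refine (integrable_rpow_neg_one_add_norm_sq (E := ℝ) (μ := volume) (by simpa using hr)).congr
    (Eventually.of_forall fun t => ?_)
  simp only [japaneseBracket]
  rw [sqrt_eq_rpow, ← rpow_mul (by positivity), Real.norm_eq_abs, sq_abs]
  ring_nf

lemma nonneg_of_norm_le_japaneseBracket {w : ℝ → ℂ} {A p : ℝ}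
    (hw : ∀ t, ‖w t‖ ≤ A * japaneseBracket t ^ (-p)) : 0 ≤ A :=
  nonneg_of_mul_nonneg_left ((norm_nonneg _).trans (hw 0)) (japaneseBracket_rpow_pos _ 0)

lemma norm_le_japaneseBracket_of_le {w : ℝ → ℂ} {A p q : ℝ} (hqp : q ≤ p)
    (hw : ∀ t, ‖w t‖ ≤ A * japaneseBracket t ^ (-p)) (t : ℝ) :
    ‖w t‖ ≤ A * japaneseBracket t ^ (-q) :=
  (hw t).trans (mul_le_mul_of_nonneg_left (japaneseBracket_rpow_neg_le_of_le hqp t)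
    (nonneg_of_norm_le_japaneseBracket hw))

lemma integrable_of_norm_le_japaneseBracket {w : ℝ → ℂ} {A p : ℝ} (hwm : AEStronglyMeasurable w)
    (hw : ∀ t, ‖w t‖ ≤ A * japaneseBracket t ^ (-p)) (hp : 1 < p) : Integrable w :=
  ((integrable_japaneseBracket_rpow_neg hp).const_mul A).mono' hwm (Eventually.of_forall hw)

/-- Splitting `⟨t⟩^{-p} = ⟨t⟩^{-q} ⟨t⟩^{-(p-q)}`, the first factor is at most `⟨x⟩^{-q}` on `S`. -/
lemma norm_setIntegral_le_of_norm_le_japaneseBracket {w : ℝ → ℂ} {A p q x : ℝ} {S : Set ℝ}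
    (hS : MeasurableSet S) (hxS : ∀ t ∈ S, |x| ≤ |t|) (hq : 0 ≤ q) (hqp : q + 1 < p)
    (hw : ∀ t, ‖w t‖ ≤ A * japaneseBracket t ^ (-p)) :
    ‖∫ t in S, w t‖ ≤ A * (∫ t, japaneseBracket t ^ (-(p - q))) * japaneseBracket x ^ (-q) := by
  have hint := integrable_japaneseBracket_rpow_neg (r := p - q) (by linarith)
  have hA := nonneg_of_norm_le_japaneseBracket hw
  have hpt : ∀ t ∈ S, ‖w t‖ ≤ A * japaneseBracket x ^ (-q) * japaneseBracket t ^ (-(p - q)) := by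
    intro t ht
    calc ‖w t‖ ≤ A * (japaneseBracket t ^ (-q) * japaneseBracket t ^ (-(p - q))) := by
          rw [← rpow_add (japaneseBracket_pos t)]; convert hw t using 3; ring
      _ ≤ A * (japaneseBracket x ^ (-q) * japaneseBracket t ^ (-(p - q))) := by
          gcongr ?_ * (?_ * _)
          · exact (japaneseBracket_rpow_pos _ t).le
          · exact japaneseBracket_rpow_neg_le_of_abs_le hq (hxS t ht)
      _ = _ := by ring
  calc ‖∫ t in S, w t‖
      ≤ ∫ t in S, A * japaneseBracket x ^ (-q) * japaneseBracket t ^ (-(p - q)) :=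
        norm_integral_le_of_norm_le (hint.const_mul _).integrableOn
          ((ae_restrict_iff' hS).2 (Eventually.of_forall hpt))
    _ ≤ ∫ t, A * japaneseBracket x ^ (-q) * japaneseBracket t ^ (-(p - q)) :=
        setIntegral_le_integral (hint.const_mul _)
          (Eventually.of_forall fun t =>
            mul_nonneg (mul_nonneg hA (japaneseBracket_rpow_pos _ x).le)
              (japaneseBracket_rpow_pos _ t).le)
    _ = _ := by rw [MeasureTheory.integral_const_mul]; ring

section Primitive

variable {ρ w : ℝ → ℂ}

lemma tendsto_atTop_of_eq_add_integral (hw : Integrable w)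
    (hρ : ∀ x, ρ x = ρ 0 + ∫ t in (0 : ℝ)..x, w t) :
    Tendsto ρ atTop (𝓝 (ρ 0 + ∫ t in Ioi 0, w t)) :=
  (tendsto_const_nhds.add (intervalIntegral_tendsto_integral_Ioi 0 hw.integrableOn
    tendsto_id)).congr fun x => (hρ x).symm

lemma tendsto_atBot_of_eq_add_integral (hw : Integrable w)
    (hρ : ∀ x, ρ x = ρ 0 + ∫ t in (0 : ℝ)..x, w t) :
    Tendsto ρ atBot (𝓝 (ρ 0 - ∫ t in Iic 0, w t)) :=
  (tendsto_const_nhds.sub (intervalIntegral_tendsto_integral_Iic 0 hw.integrableOn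
    tendsto_id)).congr fun x => by rw [hρ x, integral_symm, sub_neg_eq_add, id]

lemma eq_sub_integral_Ioi_of_eq_add_integral (hw : Integrable w)
    (hρ : ∀ x, ρ x = ρ 0 + ∫ t in (0 : ℝ)..x, w t) (x : ℝ) :
    ρ x = (ρ 0 + ∫ t in Ioi 0, w t) - ∫ t in Ioi x, w t := by
  rw [hρ x, ← integral_interval_add_Ioi hw.integrableOn hw.integrableOn]; ring

lemma eq_add_integral_Iic_of_eq_add_integral (hw : Integrable w)
    (hρ : ∀ x, ρ x = ρ 0 + ∫ t in (0 : ℝ)..x, w t) (x : ℝ) :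
    ρ x = (ρ 0 - ∫ t in Iic 0, w t) + ∫ t in Iic x, w t := by
  rw [hρ x, ← integral_Iic_sub_Iic hw.integrableOn hw.integrableOn]; ring

lemma sub_eq_integral_of_eq_add_integral (hw : ∀ a b, IntervalIntegrable w volume a b)
    (hρ : ∀ x, ρ x = ρ 0 + ∫ t in (0 : ℝ)..x, w t) (x y : ℝ) :
    ρ y - ρ x = ∫ t in x..y, w t := by
  rw [hρ x, hρ y, add_sub_add_left_eq_sub, integral_interval_sub_left (hw 0 y) (hw 0 x)]

lemma continuous_of_eq_add_integral (hw : Integrable w)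
    (hρ : ∀ x, ρ x = ρ 0 + ∫ t in (0 : ℝ)..x, w t) : Continuous ρ := by
  rw [funext hρ]
  exact continuous_const.add (continuous_primitive (fun _ _ => hw.intervalIntegrable) 0)

lemma exists_tendsto_and_decay_of_eq_add_integral {A p q : ℝ} (hq : 0 ≤ q) (hqp : q + 1 < p)
    (hwm : AEStronglyMeasurable w) (hw : ∀ t, ‖w t‖ ≤ A * japaneseBracket t ^ (-p))
    (hρ : ∀ x, ρ x = ρ 0 + ∫ t in (0 : ℝ)..x, w t) :
    ∃ lp lm : ℂ, Tendsto ρ atTop (𝓝 lp) ∧ Tendsto ρ atBot (𝓝 lm) ∧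
      ∃ C, ∀ x, ‖ρ x - (if 0 < x then lp else 0) - (if x < 0 then lm else 0)‖ ≤
        C * japaneseBracket x ^ (-q) := by
  have hwi := integrable_of_norm_le_japaneseBracket hwm hw (by linarith)
  set K := A * ∫ t, japaneseBracket t ^ (-(p - q))
  refine ⟨_, _, tendsto_atTop_of_eq_add_integral hwi hρ,
    tendsto_atBot_of_eq_add_integral hwi hρ, max K ‖ρ 0‖, fun x => ?_⟩
  rcases lt_trichotomy x 0 with hx | rfl | hx
  · rw [if_neg hx.not_gt, if_pos hx, sub_zero, eq_add_integral_Iic_of_eq_add_integral hwi hρ x,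
      add_sub_cancel_left]
    refine (norm_setIntegral_le_of_norm_le_japaneseBracket measurableSet_Iic
      (fun t ht => abs_le_abs_of_nonpos hx.le ht) hq hqp hw).trans ?_
    gcongr
    · exact (japaneseBracket_rpow_pos _ x).le
    · exact le_max_left _ _
  · simp
  · rw [if_pos hx, if_neg hx.not_gt, sub_zero, eq_sub_integral_Ioi_of_eq_add_integral hwi hρ x,
      sub_sub_cancel_left, norm_neg]
    refine (norm_setIntegral_le_of_norm_le_japaneseBracket measurableSet_Ioi
      (fun t ht => abs_le_abs_of_nonneg hx.le (le_of_lt ht)) hq hqp hw).trans ?_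
    gcongr
    · exact (japaneseBracket_rpow_pos _ x).le
    · exact le_max_left _ _

end Primitive

/-- If `g → a ≠ 0`, then `∫ₓʸ g` grows like `(y - x) ‖a‖`. -/
lemma eq_zero_of_tendsto_atTop_of_norm_integral_le {g : ℝ → ℂ} {a : ℂ} {M : ℝ}
    (hg : Continuous g) (hM : ∀ x y, ‖∫ t in x..y, g t‖ ≤ M) (hlim : Tendsto g atTop (𝓝 a)) :
    a = 0 := by
  by_contra ha
  have ha' : 0 < ‖a‖ / 2 := by positivity
  obtain ⟨X, hX⟩ := Metric.tendsto_atTop.1 hlim _ ha'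
  have hgrowth : ∀ y, X ≤ y → (y - X) * (‖a‖ / 2) ≤ M := by
    intro y hy
    have hclose : ‖∫ t in X..y, (g t - a)‖ ≤ ‖a‖ / 2 * |y - X| :=
      norm_integral_le_of_norm_le_const fun t ht => by
        rw [uIoc_of_le hy] at ht
        exact (dist_eq_norm (g t) a ▸ hX t ht.1.le).le
    have hsplit : (y - X) • a = (∫ t in X..y, g t) - ∫ t in X..y, (g t - a) := by
      rw [integral_sub (hg.intervalIntegrable X y) intervalIntegrable_const,
        intervalIntegral.integral_const]
      abel
    have := norm_sub_le (∫ t in X..y, g t) (∫ t in X..y, (g t - a))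
    rw [← hsplit, norm_smul, Real.norm_eq_abs, abs_of_nonneg (sub_nonneg.2 hy)] at this
    rw [abs_of_nonneg (sub_nonneg.2 hy)] at hclose
    linarith [hM X y]
  have hunbounded : Tendsto (fun y => (y - X) * (‖a‖ / 2)) atTop atTop :=
    (tendsto_atTop_add_const_right _ (-X) tendsto_id).atTop_mul_const ha'
  obtain ⟨y, hyM, hyX⟩ := ((hunbounded.eventually_gt_atTop M).and (eventually_ge_atTop X)).exists
  exact (hgrowth y hyX).not_gt hyM

lemma eq_zero_of_tendsto_atBot_of_norm_integral_le {g : ℝ → ℂ} {a : ℂ} {M : ℝ}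
    (hg : Continuous g) (hM : ∀ x y, ‖∫ t in x..y, g t‖ ≤ M) (hlim : Tendsto g atBot (𝓝 a)) :
    a = 0 :=
  eq_zero_of_tendsto_atTop_of_norm_integral_le (hg.comp continuous_neg)
    (fun x y => by simpa only [Function.comp_apply, integral_comp_neg] using hM (-y) (-x))
    (hlim.comp tendsto_neg_atTop_atBot)

/-- The first equation bounds the primitives of `ψ₂`, so the limits of `ψ₂` at `±∞` vanish and
`ψ₂` is itself a tail integral. -/
lemma exists_norm_le_of_threshold_system {m A B p q : ℝ} {ψ1 ψ2 f g : ℝ → ℂ} (hm : 0 < m)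
    (hq : 0 ≤ q) (hqp : q + 1 < p) (hψ1 : ∀ x, ‖ψ1 x‖ ≤ B) (hf : Integrable f)
    (hgm : AEStronglyMeasurable g) (hg : ∀ t, ‖g t‖ ≤ A * japaneseBracket t ^ (-p))
    (heq1 : ∀ x, ψ1 x = ψ1 0 + ∫ t in (0 : ℝ)..x, (f t - 2 * (m : ℂ) * ψ2 t))
    (heq2 : ∀ x, ψ2 x = ψ2 0 + ∫ t in (0 : ℝ)..x, g t) :
    ∃ K, ∀ x, ‖ψ2 x‖ ≤ K * japaneseBracket x ^ (-q) := by
  obtain ⟨lp, lm, htop, hbot, K, hK⟩ :=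
    exists_tendsto_and_decay_of_eq_add_integral hq hqp hgm hg heq2
  have hcont := continuous_of_eq_add_integral
    (integrable_of_norm_le_japaneseBracket hgm hg (by linarith)) heq2
  have hprim : ∀ x y, ‖∫ t in x..y, ψ2 t‖ ≤ ((∫ t, ‖f t‖) + 2 * B) / (2 * m) := by
    intro x y
    have hdiff := sub_eq_integral_of_eq_add_integral
      (fun a b => hf.intervalIntegrable.sub ((hcont.intervalIntegrable a b).const_mul _)) heq1 x y
    rw [integral_sub hf.intervalIntegrable ((hcont.intervalIntegrable x y).const_mul _),
      intervalIntegral.integral_const_mul] at hdiff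
    have hf_le : ‖∫ t in x..y, f t‖ ≤ ∫ t, ‖f t‖ :=
      norm_integral_le_integral_norm_uIoc.trans
        (setIntegral_le_integral hf.norm (Eventually.of_forall fun _ => norm_nonneg _))
    have h2m : 2 * (m : ℂ) * ∫ t in x..y, ψ2 t = (∫ t in x..y, f t) - (ψ1 y - ψ1 x) := by
      rw [hdiff]; ring
    have hnorm : 2 * m * ‖∫ t in x..y, ψ2 t‖ ≤ (∫ t, ‖f t‖) + 2 * B := by
      calc 2 * m * ‖∫ t in x..y, ψ2 t‖
          = ‖2 * (m : ℂ) * ∫ t in x..y, ψ2 t‖ := by simp [abs_of_pos hm]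
        _ ≤ ‖∫ t in x..y, f t‖ + (‖ψ1 y‖ + ‖ψ1 x‖) := by
            rw [h2m]; exact (norm_sub_le _ _).trans (add_le_add_right (norm_sub_le _ _) _)
        _ ≤ _ := by linarith [hψ1 x, hψ1 y]
    rw [le_div_iff₀ (by positivity)]
    linarith
  obtain rfl := eq_zero_of_tendsto_atTop_of_norm_integral_le hcont hprim htop
  obtain rfl := eq_zero_of_tendsto_atBot_of_norm_integral_le hcont hprim hbot
  exact ⟨K, fun x => by simpa using hK x⟩

theorem stmt16_general (m ε : ℝ) (hm : 0 < m) (hε : 0 < ε)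
    (V : ℝ → (Fin 2 → ℂ) →L[ℂ] (Fin 2 → ℂ)) (CΨ : ℝ)
    (hVdecay : ∃ C, ∀ x, ‖V x‖ ≤ C * Real.sqrt (1 + x ^ 2) ^ (-(3 + ε)))
    (ψ1 ψ2 : ℝ → ℂ)
    (hΨ : ∀ x, ‖(![ψ1 x, ψ2 x] : Fin 2 → ℂ)‖ ≤ CΨ)
    (hmeas : AEStronglyMeasurable (fun t => V t ![ψ1 t, ψ2 t]) volume)
    (heq1 : ∀ x, ψ1 x = ψ1 0 +
      ∫ t in (0:ℝ)..x, (V t ![ψ1 t, ψ2 t] 1 - 2 * (m : ℂ) * ψ2 t))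
    (heq2 : ∀ x, ψ2 x = ψ2 0 + ∫ t in (0:ℝ)..x, (-(V t ![ψ1 t, ψ2 t] 0))) :
    Integrable ψ2 volume ∧
      ∃ lp lm : ℂ, Tendsto ψ1 atTop (𝓝 lp) ∧ Tendsto ψ1 atBot (𝓝 lm) ∧
        ∃ C, ∀ x, ‖ψ1 x - (if 0 < x then lp else 0) - (if x < 0 then lm else 0)‖ ≤
          C * Real.sqrt (1 + x ^ 2) ^ (-(ε / 2)) := by
  obtain ⟨C, hC⟩ := hVdecay
  have hCΨ : 0 ≤ CΨ := (norm_nonneg _).trans (hΨ 0)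
  have hf : ∀ i t, ‖V t ![ψ1 t, ψ2 t] i‖ ≤ C * CΨ * japaneseBracket t ^ (-(3 + ε)) :=
    fun i t => calc
      _ ≤ ‖V t‖ * CΨ := (norm_le_pi_norm _ i).trans ((V t).le_opNorm_of_le (hΨ t))
      _ ≤ _ := by rw [mul_right_comm]; exact mul_le_mul_of_nonneg_right (hC t) hCΨ
  have hfm : ∀ i, AEStronglyMeasurable (fun t => V t ![ψ1 t, ψ2 t] i) :=
    fun i => (continuous_apply i).comp_aestronglyMeasurable hmeas
  have hg : ∀ t, ‖-V t ![ψ1 t, ψ2 t] 0‖ ≤ C * CΨ * japaneseBracket t ^ (-(3 + ε)) := by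
    simpa only [norm_neg] using hf 0
  have hψ2c := continuous_of_eq_add_integral
    (integrable_of_norm_le_japaneseBracket (hfm 0).neg hg (by linarith)) heq2
  obtain ⟨K, hK⟩ := exists_norm_le_of_threshold_system (q := 2 + ε / 2) hm (by positivity)
    (by linarith) (fun x => (norm_le_pi_norm ![ψ1 x, ψ2 x] 0).trans (hΨ x))
    (integrable_of_norm_le_japaneseBracket (hfm 1) (hf 1) (by linarith)) (hfm 0).neg hg heq1 heq2
  have hu : ∀ t, ‖V t ![ψ1 t, ψ2 t] 1 - 2 * (m : ℂ) * ψ2 t‖ ≤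
      (C * CΨ + 2 * m * K) * japaneseBracket t ^ (-(2 + ε / 2)) := fun t => calc
    _ ≤ ‖V t ![ψ1 t, ψ2 t] 1‖ + 2 * m * ‖ψ2 t‖ :=
      (norm_sub_le _ _).trans_eq (by simp [abs_of_pos hm])
    _ ≤ C * CΨ * japaneseBracket t ^ (-(2 + ε / 2)) +
          2 * m * (K * japaneseBracket t ^ (-(2 + ε / 2))) :=
      add_le_add (norm_le_japaneseBracket_of_le (by linarith) (hf 1) t)
        (mul_le_mul_of_nonneg_left (hK t) (by positivity))
    _ = _ := by ring
  exact ⟨integrable_of_norm_le_japaneseBracket hψ2c.aestronglyMeasurable hK (by linarith),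
    exists_tendsto_and_decay_of_eq_add_integral (by positivity) (by linarith)
      ((hfm 1).sub (hψ2c.aestronglyMeasurable.const_mul _)) hu heq1⟩

/-- If moreover `|V(x)| ≲ ⟨x⟩^{-3-ε}`, then `ψ₂ ∈ L¹`, the limits `l_± = lim_{±∞} ψ₁`
exist, and `ψ₁ - l₊χ_{(0,∞)} - l₋χ_{(-∞,0)}` decays like `⟨x⟩^{-ε/2}`. -/
theorem stmt16 (m ε : ℝ) (hm : 0 < m) (hε : 0 < ε)
    (V : ℝ → (Fin 2 → ℂ) →L[ℂ] (Fin 2 → ℂ)) (CV CΨ : ℝ)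
    (hVinf : ∀ x, ‖V x‖ ≤ CV)
    (hV1 : Integrable (fun x => ‖V x‖) volume)
    (hVdecay : ∃ C, ∀ x, ‖V x‖ ≤ C * Real.sqrt (1 + x ^ 2) ^ (-(3 + ε)))
    (ψ1 ψ2 : ℝ → ℂ)
    (hΨ : ∀ x, ‖(![ψ1 x, ψ2 x] : Fin 2 → ℂ)‖ ≤ CΨ)
    (hmeas : AEStronglyMeasurable (fun t => V t ![ψ1 t, ψ2 t]) volume)
    (heq1 : ∀ x, ψ1 x = ψ1 0 +
      ∫ t in (0:ℝ)..x, (V t ![ψ1 t, ψ2 t] 1 - 2 * (m : ℂ) * ψ2 t))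
    (heq2 : ∀ x, ψ2 x = ψ2 0 + ∫ t in (0:ℝ)..x, (-(V t ![ψ1 t, ψ2 t] 0))) :
    Integrable ψ2 volume ∧
      ∃ lp lm : ℂ, Tendsto ψ1 atTop (𝓝 lp) ∧ Tendsto ψ1 atBot (𝓝 lm) ∧
        ∃ C, ∀ x, ‖ψ1 x - (if 0 < x then lp else 0) - (if x < 0 then lm else 0)‖ ≤
          C * Real.sqrt (1 + x ^ 2) ^ (-(ε / 2)) :=
  stmt16_general m ε hm hε V CΨ hVdecay ψ1 ψ2 hΨ hmeas heq1 heq2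
end
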